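/- arXiv:1405.0994 — 5 statements merged into one kernel-verified Lean document; each statement's English description precedes it below -/
import Mathlib

section
/- Let G be a group equipped with a bi-order <, and let h, z be non-identity elements of G. Let r ≥ 1 and let m_1, …, m_r and d_1, …, d_r be integers forming tidy data, and suppose that ∏_{i=1}^{r} z^{-d_i} h^{m_i} z^{d_i} = 1 in G. Then the polynomial A(X) = Σ_{i=1}^{r} m_i X^{d_i − e} ∈ ℤ[X], where e = min_{1≤i≤r} d_i, has a real root λ with λ > 0. -/
/-!
Write `h_k = z^{-k} h z^k` (`conjSeq z h k`), so that the relation reads `∏ h_{d_i}^{m_i} = 1`;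
replacing `(h, m)` by `(h⁻¹, -m)` we may assume `1 < h`. For `1 < β`, the Dedekind cut
`archLog β g = sup {p/q : β^p ≤ g^q}` is an additive homomorphism to `ℝ` on the subgroup of
elements bounded by powers of `β`, because in a bi-ordered group `(xy)^n` lies between `x^n y^n`
and `y^n x^n`; moreover every monotone homomorphism on that subgroup is a multiple of it.

If `h_1` is not bounded by a power of `h`, then `h_k` is infinitesimal with respect to `h_{k+1}`,
and `archLog` to the base `h_D` kills every factor of the relation with `d_i < D`, leaving
`∑_{d_i = D} m_i = 0`, against tidiness; symmetrically (with `z⁻¹`) if `h` is not bounded by a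
power of `h_1`. Otherwise all `h_k` lie in the subgroup bounded by `h`, conjugation by `z`
multiplies `archLog h` by `λ = archLog h h_1 > 0`, hence `archLog h h_k = λ^k`, and applying
`archLog h` to the relation gives `∑ m_i λ^{d_i} = 0`.
-/

open Polynomial

theorem zpow_right_strictMono' {G : Type*} [Group G] [PartialOrder G] [MulLeftMono G] {a : G}
    (ha : 1 < a) : StrictMono fun n : ℤ => a ^ n :=
  strictMono_int_of_lt_succ fun n => by
    simpa [zpow_add_one] using lt_mul_of_one_lt_right' (a ^ n) ha

theorem eq_of_forall_nat_mul_mem_Icc {x y C : ℝ}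
    (h : ∀ q : ℕ, 0 < q → ∃ a, q * x ∈ Set.Icc a (a + C) ∧ q * y ∈ Set.Icc a (a + C)) :
    x = y := by
  by_contra hne
  have hpos : 0 < |x - y| := abs_pos.2 (sub_ne_zero.2 hne)
  obtain ⟨q, hq⟩ := exists_nat_gt (C / |x - y|)
  obtain ⟨a, ⟨hx, hx'⟩, hy, hy'⟩ := h (q + 1) q.succ_pos
  have hC : ((q : ℝ) + 1) * |x - y| ≤ C := by
    rw [← abs_of_pos (by positivity : (0 : ℝ) < q + 1), ← abs_mul, mul_sub, abs_sub_le_iff]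
    push_cast at hx hx' hy hy'
    constructor <;> linarith
  have := (div_lt_iff₀ hpos).1 hq
  nlinarith

section BiOrderedGroup

variable {G : Type*} [Group G] [LinearOrder G] [MulLeftMono G] [MulRightMono G]

theorem MulAut.conj_strictMono (w : G) : StrictMono (MulAut.conj w) := fun a b hab => by
  simpa only [MulAut.conj_apply] using mul_lt_mul_left (mul_lt_mul_right hab w) w⁻¹

theorem pow_mul_le_mul_pow_of_mul_le_mul {a b : G} (h : a * b ≤ b * a) (n : ℕ) :
    a ^ n * b ≤ b * a ^ n := by
  induction n with
  | zero => simp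
  | succ n ih =>
    calc a ^ (n + 1) * b = a ^ n * (a * b) := by rw [pow_succ, mul_assoc]
      _ ≤ a ^ n * (b * a) := mul_le_mul_right h _
      _ = a ^ n * b * a := by rw [mul_assoc]
      _ ≤ b * a ^ n * a := mul_le_mul_left ih a
      _ = b * a ^ (n + 1) := by rw [pow_succ, mul_assoc]

theorem mul_pow_le_pow_mul_of_mul_le_mul {a b : G} (h : a * b ≤ b * a) (n : ℕ) :
    a * b ^ n ≤ b ^ n * a :=
  -- In the order dual the hypothesis reads `b * a ≤ a * b`.
  pow_mul_le_mul_pow_of_mul_le_mul (G := Gᵒᵈ) (a := b) (b := a) h n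

theorem pow_mul_pow_le_mul_pow_of_mul_le_mul {a b : G} (h : a * b ≤ b * a) (n : ℕ) :
    a ^ n * b ^ n ≤ (a * b) ^ n := by
  induction n with
  | zero => simp
  | succ n ih =>
    calc a ^ (n + 1) * b ^ (n + 1) = a ^ n * (a * b ^ n) * b := by
          rw [pow_succ', pow_succ]; group
      _ ≤ a ^ n * (b ^ n * a) * b :=
          mul_le_mul_left (mul_le_mul_right (mul_pow_le_pow_mul_of_mul_le_mul h n) _) _
      _ = a ^ n * b ^ n * (a * b) := by group
      _ ≤ (a * b) ^ (n + 1) := by rw [pow_succ]; exact mul_le_mul_left ih _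

theorem mul_pow_le_pow_mul_pow_of_mul_le_mul {a b : G} (h : a * b ≤ b * a) (n : ℕ) :
    (a * b) ^ n ≤ b ^ n * a ^ n := by
  induction n with
  | zero => simp
  | succ n ih =>
    calc (a * b) ^ (n + 1) ≤ b ^ n * a ^ n * (a * b) := by
          rw [pow_succ]; exact mul_le_mul_left ih _
      _ = b ^ n * (a ^ (n + 1) * b) := by rw [pow_succ]; group
      _ ≤ b ^ n * (b * a ^ (n + 1)) :=
          mul_le_mul_right (pow_mul_le_mul_pow_of_mul_le_mul h _) _
      _ = b ^ (n + 1) * a ^ (n + 1) := by rw [pow_succ]; group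

theorem mul_le_mul_pow_of_commute {u v x y : G} (huv : Commute u v) {n : ℕ} (hx : u ≤ x ^ n)
    (hy : v ≤ y ^ n) : u * v ≤ (x * y) ^ n := by
  rcases le_total (x * y) (y * x) with hxy | hyx
  · exact (mul_le_mul' hx hy).trans (pow_mul_pow_le_mul_pow_of_mul_le_mul hxy n)
  · rw [huv.eq]
    exact (mul_le_mul' hy hx).trans <|
      mul_pow_le_pow_mul_pow_of_mul_le_mul (a := OrderDual.toDual x) (b := OrderDual.toDual y) hyx n

theorem mul_pow_le_mul_of_commute {u v x y : G} (huv : Commute u v) {n : ℕ} (hx : x ^ n ≤ u)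
    (hy : y ^ n ≤ v) : (x * y) ^ n ≤ u * v :=
  mul_le_mul_pow_of_commute (G := Gᵒᵈ) huv hx hy

end BiOrderedGroup

section ArchLog

variable {G : Type*} [Group G] [LinearOrder G] [MulLeftMono G] [MulRightMono G] {β β' g x y : G}

variable (β) in
def boundedSubgroup : Subgroup G where
  carrier := {g | ∃ N : ℕ, g ≤ β ^ N ∧ g⁻¹ ≤ β ^ N}
  one_mem' := ⟨0, by simp, by simp⟩
  mul_mem' := by
    rintro a b ⟨M, haM, haM'⟩ ⟨N, hbN, hbN'⟩
    refine ⟨M + N, ?_, ?_⟩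
    · rw [pow_add]
      exact mul_le_mul' haM hbN
    · rw [mul_inv_rev, add_comm, pow_add]
      exact mul_le_mul' hbN' haM'
  inv_mem' := by
    rintro a ⟨N, haN, haN'⟩
    exact ⟨N, haN', by rwa [inv_inv]⟩

theorem mem_boundedSubgroup_of_le_pow (hβ : 1 ≤ β) (hg : 1 ≤ g) {n : ℕ} (h : g ≤ β ^ n) :
    g ∈ boundedSubgroup β :=
  ⟨n, h, (inv_le_one'.2 hg).trans (one_le_pow_of_one_le' hβ n)⟩

theorem pow_lt_of_notMem_boundedSubgroup (hβ : 1 ≤ β) (hg : 1 ≤ g) (h : g ∉ boundedSubgroup β)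
    (n : ℕ) : β ^ n < g :=
  lt_of_not_ge fun hle => h (mem_boundedSubgroup_of_le_pow hβ hg hle)

theorem boundedSubgroup_le_of_mem (h : β' ∈ boundedSubgroup β) :
    boundedSubgroup β' ≤ boundedSubgroup β := by
  obtain ⟨M, hM, -⟩ := h
  rintro g ⟨N, hN, hN'⟩
  refine ⟨M * N, ?_, ?_⟩ <;> rw [pow_mul]
  exacts [hN.trans (pow_le_pow_left' hM N), hN'.trans (pow_le_pow_left' hM N)]

theorem conj_mem_boundedSubgroup (w : G) (hg : g ∈ boundedSubgroup β) :
    MulAut.conj w g ∈ boundedSubgroup (MulAut.conj w β) := by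
  obtain ⟨N, hN, hN'⟩ := hg
  refine ⟨N, ?_, ?_⟩ <;> rw [← map_pow]
  exacts [(MulAut.conj_strictMono w).monotone hN,
    by simpa only [map_inv] using (MulAut.conj_strictMono w).monotone hN']

theorem exists_zpow_le_lt (hβ : 1 < β) (hg : g ∈ boundedSubgroup β) :
    ∃ a : ℤ, β ^ a ≤ g ∧ g < β ^ (a + 1) := by
  obtain ⟨N, hN, hN'⟩ := hg
  obtain ⟨a, ha, hmax⟩ := Int.exists_greatest_of_bdd (P := fun a => β ^ a ≤ g)
    ⟨N, fun a ha => (zpow_right_strictMono' hβ).le_iff_le.1 (ha.trans (by simpa using hN))⟩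
    ⟨-N, by simpa using inv_le_of_inv_le' hN'⟩
  exact ⟨a, ha, lt_of_not_ge fun hle => by linarith [hmax _ hle]⟩

theorem mul_le_mul_of_zpow_le_pow_of_pow_le_zpow (hβ : 1 < β) {p r : ℤ} {q s : ℕ}
    (hp : β ^ p ≤ g ^ q) (hr : g ^ s ≤ β ^ r) : p * s ≤ r * q := by
  refine (zpow_right_strictMono' hβ).le_iff_le.1 ?_
  calc β ^ (p * s) = (β ^ p) ^ s := by rw [zpow_mul, zpow_natCast]
    _ ≤ (g ^ q) ^ s := pow_le_pow_left' hp s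
    _ = (g ^ s) ^ q := by rw [← pow_mul, ← pow_mul, mul_comm]
    _ ≤ (β ^ r) ^ q := pow_le_pow_left' hr q
    _ = β ^ (r * q) := by rw [zpow_mul, zpow_natCast]

variable (β g) in
def archCut : Set ℝ := {x | ∃ p : ℤ, ∃ q : ℕ, 0 < q ∧ β ^ p ≤ g ^ q ∧ x = p / q}

variable (β g) in
/-- For `G ⊆ ℝ_{>0}` this is `log g / log β`. -/
noncomputable def archLog : ℝ := sSup (archCut β g)

theorem le_div_of_mem_archCut (hβ : 1 < β) {x : ℝ} (hx : x ∈ archCut β g) {r : ℤ} {s : ℕ}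
    (hs : 0 < s) (h : g ^ s ≤ β ^ r) : x ≤ r / s := by
  obtain ⟨p, q, hq, hp, rfl⟩ := hx
  rw [div_le_div_iff₀ (by positivity) (by positivity)]
  exact_mod_cast mul_le_mul_of_zpow_le_pow_of_pow_le_zpow hβ hp h

theorem archCut_nonempty (hg : g ∈ boundedSubgroup β) : (archCut β g).Nonempty := by
  obtain ⟨N, -, hN'⟩ := hg
  exact ⟨_, -N, 1, one_pos, by simpa using inv_le_of_inv_le' hN', rfl⟩

theorem bddAbove_archCut (hβ : 1 < β) (hg : g ∈ boundedSubgroup β) : BddAbove (archCut β g) := by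
  obtain ⟨N, hN, -⟩ := hg
  exact ⟨N, fun x hx => by simpa using le_div_of_mem_archCut hβ hx one_pos (r := N) (by simpa)⟩

theorem le_mul_archLog (hβ : 1 < β) (hg : g ∈ boundedSubgroup β) {p : ℤ} {q : ℕ} (hq : 0 < q)
    (h : β ^ p ≤ g ^ q) : (p : ℝ) ≤ q * archLog β g :=
  (div_le_iff₀' (by positivity)).1 (le_csSup (bddAbove_archCut hβ hg) ⟨p, q, hq, h, rfl⟩)

theorem mul_archLog_le (hβ : 1 < β) (hg : g ∈ boundedSubgroup β) {r : ℤ} {q : ℕ} (hq : 0 < q)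
    (h : g ^ q ≤ β ^ r) : q * archLog β g ≤ r :=
  (le_div_iff₀' (by positivity)).1
    (csSup_le (archCut_nonempty hg) fun _ hx => le_div_of_mem_archCut hβ hx hq h)

theorem archLog_mul (hβ : 1 < β) (hx : x ∈ boundedSubgroup β) (hy : y ∈ boundedSubgroup β) :
    archLog β (x * y) = archLog β x + archLog β y := by
  refine eq_of_forall_nat_mul_mem_Icc (C := 2) fun q hq => ?_
  obtain ⟨a, ha, ha'⟩ := exists_zpow_le_lt hβ (pow_mem hx q)
  obtain ⟨b, hb, hb'⟩ := exists_zpow_le_lt hβ (pow_mem hy q)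
  have hlow : β ^ (a + b) ≤ (x * y) ^ q := by
    rw [zpow_add]
    exact mul_le_mul_pow_of_commute (Commute.zpow_zpow_self β a b) ha hb
  have hup : (x * y) ^ q ≤ β ^ (a + 1 + (b + 1)) := by
    rw [zpow_add]
    exact mul_pow_le_mul_of_commute (Commute.zpow_zpow_self β _ _) ha'.le hb'.le
  have hxy := mul_mem hx hy
  have hxy₁ := le_mul_archLog hβ hxy hq hlow
  have hxy₂ := mul_archLog_le hβ hxy hq hup
  have hx₁ := le_mul_archLog hβ hx hq ha
  have hx₂ := mul_archLog_le hβ hx hq ha'.le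
  have hy₁ := le_mul_archLog hβ hy hq hb
  have hy₂ := mul_archLog_le hβ hy hq hb'.le
  push_cast at hxy₁ hxy₂ hx₂ hy₂
  exact ⟨a + b, ⟨by linarith, by linarith⟩, by constructor <;> linarith⟩

variable (β) in
noncomputable def archLogHom (hβ : 1 < β) : boundedSubgroup β →* Multiplicative ℝ :=
  MonoidHom.mk' (fun g => .ofAdd (archLog β g)) fun x y => congrArg _ (archLog_mul hβ x.2 y.2)

theorem archLog_zpow (hβ : 1 < β) (hg : g ∈ boundedSubgroup β) (k : ℤ) :
    archLog β (g ^ k) = k * archLog β g := by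
  simpa [archLogHom] using congrArg Multiplicative.toAdd (map_zpow (archLogHom β hβ) ⟨g, hg⟩ k)

theorem archLog_one (hβ : 1 < β) : archLog β (1 : G) = 0 := by
  simpa using archLog_zpow hβ (one_mem (boundedSubgroup β)) 0

theorem self_mem_boundedSubgroup (hβ : 1 ≤ β) : β ∈ boundedSubgroup β :=
  mem_boundedSubgroup_of_le_pow hβ hβ (pow_one β).ge

theorem archLog_self (hβ : 1 < β) : archLog β β = 1 := by
  have hmem := self_mem_boundedSubgroup hβ.le
  refine le_antisymm ?_ ?_
  · simpa using mul_archLog_le hβ hmem one_pos (r := 1) (by simp)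
  · simpa using le_mul_archLog hβ hmem one_pos (p := 1) (by simp)

theorem archLog_monotoneOn (hβ : 1 < β) : MonotoneOn (archLog β) (boundedSubgroup β) :=
  fun _ hx _ hy hxy => csSup_le_csSup (bddAbove_archCut hβ hy) (archCut_nonempty hx)
    fun _ ⟨p, q, hq, hp, he⟩ => ⟨p, q, hq, hp.trans (pow_le_pow_left' hxy q), he⟩

theorem archLog_conj (w β g : G) :
    archLog (MulAut.conj w β) (MulAut.conj w g) = archLog β g := by
  simp only [archLog, archCut, ← map_zpow, ← map_pow, (MulAut.conj_strictMono w).le_iff_le]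

theorem archLog_pos (hβ : 1 < β) (hg : g ∈ boundedSubgroup β) (hβg : β ∈ boundedSubgroup g) :
    0 < archLog β g := by
  obtain ⟨n, hn, -⟩ := hβg
  have hn0 : 0 < n := Nat.pos_of_ne_zero fun h0 => (not_le.2 hβ) (by simpa [h0] using hn)
  have hlog := le_mul_archLog hβ hg hn0 (p := 1) (by simpa using hn)
  exact pos_of_mul_pos_right (by push_cast at hlog; linarith) (Nat.cast_nonneg n)

theorem archLog_eq_zero_of_forall_pow_le (hβ : 1 < β) (hg : 1 ≤ g) (h : ∀ n : ℕ, g ^ n ≤ β) :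
    archLog β g = 0 := by
  have hmem := mem_boundedSubgroup_of_le_pow hβ.le hg (n := 1) (by simpa using h 1)
  refine eq_of_forall_nat_mul_mem_Icc (C := 1) fun q hq => ⟨0, ⟨?_, ?_⟩, by simp, by simp⟩
  · simpa using le_mul_archLog hβ hmem hq (p := 0) (by simpa using one_le_pow_of_one_le' hg q)
  · simpa using mul_archLog_le hβ hmem hq (r := 1) (by simpa using h q)

theorem eq_mul_archLog_of_monotoneOn (hβ : 1 < β) {ψ : G → ℝ}
    (hψ : ∀ g ∈ boundedSubgroup β, ∀ k : ℤ, ψ (g ^ k) = k * ψ g)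
    (hmono : MonotoneOn ψ (boundedSubgroup β)) (hg : g ∈ boundedSubgroup β) :
    ψ g = ψ β * archLog β g := by
  have hβmem := self_mem_boundedSubgroup hβ.le
  have hψβ : 0 ≤ ψ β := by
    have h1 : ψ 1 = 0 := by simpa using hψ 1 (one_mem _) 0
    simpa [h1] using hmono (one_mem _) hβmem hβ.le
  refine eq_of_forall_nat_mul_mem_Icc (C := ψ β) fun q hq => ?_
  obtain ⟨a, ha, ha'⟩ := exists_zpow_le_lt hβ (pow_mem hg q)
  have hψg : ψ (g ^ q) = q * ψ g := by simpa using hψ g hg q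
  have h1 := hmono (zpow_mem hβmem a) (pow_mem hg q) ha
  have h2 := hmono (pow_mem hg q) (zpow_mem hβmem (a + 1)) ha'.le
  rw [hψg, hψ β hβmem] at h1 h2
  have h3 := mul_le_mul_of_nonneg_left (le_mul_archLog hβ hg hq ha) hψβ
  have h4 := mul_le_mul_of_nonneg_left (mul_archLog_le hβ hg hq ha'.le) hψβ
  push_cast at *
  exact ⟨a * ψ β, ⟨h1, by linarith⟩, by constructor <;> linarith⟩

theorem archLog_eq_mul_archLog (hβ : 1 < β) (hβ' : 1 < β') (hmem : β' ∈ boundedSubgroup β)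
    (hg : g ∈ boundedSubgroup β') : archLog β g = archLog β β' * archLog β' g :=
  have hle := boundedSubgroup_le_of_mem hmem
  eq_mul_archLog_of_monotoneOn hβ' (fun _ hx k => archLog_zpow hβ (hle hx) k)
    ((archLog_monotoneOn hβ).mono hle) hg

theorem archLog_list_prod_zpow (hβ : 1 < β) {ι : Type*} {l : List ι} {f : ι → G} (m : ι → ℤ)
    (hf : ∀ i ∈ l, f i ∈ boundedSubgroup β) :
    archLog β (l.map fun i => f i ^ m i).prod = (l.map fun i => m i * archLog β (f i)).sum := by
  induction l with
  | nil => simp [archLog_one hβ]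
  | cons i l ih =>
    have hl : ∀ j ∈ l, f j ∈ boundedSubgroup β := fun j hj => hf j (.tail _ hj)
    have hprod : (l.map fun i => f i ^ m i).prod ∈ boundedSubgroup β :=
      list_prod_mem (by simpa using fun j hj => zpow_mem (hl j hj) (m j))
    simp only [List.map_cons, List.prod_cons, List.sum_cons]
    rw [archLog_mul hβ (zpow_mem (hf i (.head _)) _) hprod, archLog_zpow hβ (hf i (.head _)), ih hl]

end ArchLog

section ConjSeq

variable {G : Type*} [Group G] {z h : G}

variable (z h) in
def conjSeq (k : ℤ) : G := MulAut.conj (z ^ (-k)) h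

theorem conjSeq_zero : conjSeq z h 0 = h := by simp [conjSeq]

theorem conjSeq_add (j k : ℤ) :
    conjSeq z h (j + k) = MulAut.conj (z ^ (-j)) (conjSeq z h k) := by
  simp only [conjSeq, neg_add, zpow_add, map_mul, MulAut.mul_apply]

theorem conjSeq_zpow (k n : ℤ) : conjSeq z h k ^ n = z ^ (-k) * h ^ n * z ^ k := by
  rw [conjSeq, ← map_zpow, MulAut.conj_apply, zpow_neg, inv_inv]

theorem conj_conjSeq_one : MulAut.conj z (conjSeq z h 1) = h := by
  rw [conjSeq, ← MulAut.mul_apply, ← map_mul, zpow_neg_one, mul_inv_cancel, map_one,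
    MulAut.one_apply]

variable [LinearOrder G] [MulLeftMono G] [MulRightMono G] {ι : Type*} {l : List ι} {m d : ι → ℤ}

theorem one_lt_conjSeq (hh : 1 < h) (k : ℤ) : 1 < conjSeq z h k := by
  have := MulAut.conj_strictMono (z ^ (-k)) hh
  rwa [map_one] at this

theorem conjSeq_mem_boundedSubgroup (h₁ : conjSeq z h 1 ∈ boundedSubgroup h)
    (h₂ : h ∈ boundedSubgroup (conjSeq z h 1)) (k : ℤ) : conjSeq z h k ∈ boundedSubgroup h := by
  have hup := boundedSubgroup_le_of_mem h₁
  have hdown : boundedSubgroup (MulAut.conj z h) ≤ boundedSubgroup h :=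
    boundedSubgroup_le_of_mem (by simpa only [conj_conjSeq_one] using conj_mem_boundedSubgroup z h₂)
  induction k using Int.induction_on with
  | zero => simpa [conjSeq_zero] using hup h₂
  | succ k ih =>
    rw [add_comm, conjSeq_add]
    exact hup (conj_mem_boundedSubgroup _ ih)
  | pred k ih =>
    rw [show -(k : ℤ) - 1 = -1 + -k by ring, conjSeq_add, neg_neg, zpow_one]
    exact hdown (conj_mem_boundedSubgroup z ih)

theorem archLog_conjSeq (hh : 1 < h) (h₁ : conjSeq z h 1 ∈ boundedSubgroup h)
    (h₂ : h ∈ boundedSubgroup (conjSeq z h 1)) (k : ℤ) :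
    archLog h (conjSeq z h k) = archLog h (conjSeq z h 1) ^ k := by
  have hmem := conjSeq_mem_boundedSubgroup h₁ h₂
  have hlam := (archLog_pos hh h₁ h₂).ne'
  have hstep (k : ℤ) :
      archLog h (conjSeq z h (1 + k)) = archLog h (conjSeq z h 1) * archLog h (conjSeq z h k) := by
    have hconj : archLog (conjSeq z h 1) (conjSeq z h (1 + k)) = archLog h (conjSeq z h k) := by
      rw [conjSeq_add]
      exact archLog_conj _ _ _
    rw [archLog_eq_mul_archLog hh (one_lt_conjSeq hh 1) h₁
      (by rw [conjSeq_add]; exact conj_mem_boundedSubgroup _ (hmem k)), hconj]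
  induction k using Int.induction_on with
  | zero => simp [conjSeq_zero, archLog_self hh]
  | succ k ih => rw [add_comm, hstep, ih, add_comm, zpow_add_one₀ hlam, mul_comm]
  | pred k ih =>
    have := hstep (-k - 1)
    rw [show 1 + (-(k : ℤ) - 1) = -k by ring, ih] at this
    rw [zpow_sub_one₀ hlam, this]
    field_simp

theorem exists_pos_sum_eq_zero_of_mem_boundedSubgroup (hh : 1 < h)
    (h₁ : conjSeq z h 1 ∈ boundedSubgroup h) (h₂ : h ∈ boundedSubgroup (conjSeq z h 1))
    (hrel : (l.map fun i => z ^ (-d i) * h ^ m i * z ^ d i).prod = 1) :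
    ∃ lam : ℝ, 0 < lam ∧ (l.map fun i => (m i : ℝ) * lam ^ d i).sum = 0 := by
  refine ⟨_, archLog_pos hh h₁ h₂, ?_⟩
  have := archLog_list_prod_zpow hh (l := l) (f := fun i => conjSeq z h (d i)) m
    fun i _ => conjSeq_mem_boundedSubgroup h₁ h₂ (d i)
  simp only [conjSeq_zpow, hrel, archLog_one hh] at this
  have hterm (i) (_ : i ∈ l) : (m i : ℝ) * archLog h (conjSeq z h (d i)) =
      m i * archLog h (conjSeq z h 1) ^ d i := by
    rw [archLog_conjSeq hh h₁ h₂]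
  rw [List.map_congr_left hterm] at this
  exact this.symm

theorem sum_eq_zero_of_forall_pow_lt_conjSeq_one (hh : 1 < h)
    (hlt : ∀ n : ℕ, h ^ n < conjSeq z h 1) {D : ℤ} (hD : ∀ i ∈ l, d i ≤ D)
    (hrel : (l.map fun i => z ^ (-d i) * h ^ m i * z ^ d i).prod = 1) :
    (l.map fun i => if d i = D then m i else 0).sum = 0 := by
  have hstep (k : ℤ) (n : ℕ) : conjSeq z h k ^ n < conjSeq z h (k + 1) := by
    rw [conjSeq_add, conjSeq, ← map_pow]
    exact MulAut.conj_strictMono _ (hlt n)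
  have hmono : StrictMono (conjSeq z h) := strictMono_int_of_lt_succ fun k => by
    simpa using hstep k 1
  have hβ := one_lt_conjSeq (z := z) hh D
  have hmem (i) (hi : i ∈ l) : conjSeq z h (d i) ∈ boundedSubgroup (conjSeq z h D) :=
    mem_boundedSubgroup_of_le_pow hβ.le (one_lt_conjSeq hh _).le (n := 1)
      (by simpa using hmono.monotone (hD i hi))
  have hlog (i) (hi : i ∈ l) : (m i : ℝ) * archLog (conjSeq z h D) (conjSeq z h (d i)) =
      ((if d i = D then m i else 0 : ℤ) : ℝ) := by
    split_ifs with hiD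
    · rw [hiD, archLog_self hβ, mul_one]
    · rw [archLog_eq_zero_of_forall_pow_le hβ (one_lt_conjSeq hh _).le fun n =>
        (hstep _ n).le.trans (hmono.monotone (by grind [hD i hi])), mul_zero, Int.cast_zero]
  have := archLog_list_prod_zpow hβ m hmem
  simp only [conjSeq_zpow, hrel, archLog_one hβ, List.map_congr_left hlog] at this
  have hsum : ((l.map fun i => if d i = D then m i else 0).sum : ℝ) = 0 := by
    rw [Int.cast_list_sum, List.map_map]
    exact this.symm
  exact_mod_cast hsum

end ConjSeq

theorem List.sum_map_neg {ι α : Type*} [AddCommGroup α] (l : List ι) (f : ι → α) :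
    (l.map fun i => -f i).sum = -(l.map f).sum := by
  simpa [Function.comp_def] using (map_list_sum (negAddMonoidHom : α →+ α) (l.map f)).symm

section Relation

variable {G : Type*} [Group G] [LinearOrder G] [MulLeftMono G] [MulRightMono G] {z h : G}
  {ι : Type*} {l : List ι} {m d : ι → ℤ} {e D : ℤ}

theorem exists_pos_sum_eq_zero_of_one_lt (hh : 1 < h) (he : ∀ i ∈ l, e ≤ d i)
    (hD : ∀ i ∈ l, d i ≤ D) (hmin : (l.map fun i => if d i = e then m i else 0).sum ≠ 0)
    (hmax : (l.map fun i => if d i = D then m i else 0).sum ≠ 0)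
    (hrel : (l.map fun i => z ^ (-d i) * h ^ m i * z ^ d i).prod = 1) :
    ∃ lam : ℝ, 0 < lam ∧ (l.map fun i => (m i : ℝ) * lam ^ d i).sum = 0 := by
  have hh₁ := one_lt_conjSeq (z := z) hh 1
  by_cases h₁ : conjSeq z h 1 ∈ boundedSubgroup h
  swap
  · exact (hmax (sum_eq_zero_of_forall_pow_lt_conjSeq_one hh
      (pow_lt_of_notMem_boundedSubgroup hh.le hh₁.le h₁) hD hrel)).elim
  by_cases h₂ : h ∈ boundedSubgroup (conjSeq z h 1)
  · exact exists_pos_sum_eq_zero_of_mem_boundedSubgroup hh h₁ h₂ hrel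
  -- The first case again, for `z⁻¹` and `-d`, where `-e` is the maximal exponent.
  have hlt (n : ℕ) : h ^ n < conjSeq z⁻¹ h 1 := by
    have := MulAut.conj_strictMono z (pow_lt_of_notMem_boundedSubgroup hh₁.le hh.le h₂ n)
    rwa [map_pow, conj_conjSeq_one, ← inv_inv z, ← zpow_neg_one] at this
  refine (hmin ?_).elim
  simpa using sum_eq_zero_of_forall_pow_lt_conjSeq_one (z := z⁻¹) (d := fun i => -d i) (D := -e)
    hh hlt (by simpa using he) (by simpa [inv_zpow'] using hrel)

theorem exists_pos_sum_eq_zero (hh : h ≠ 1) (he : ∀ i ∈ l, e ≤ d i)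
    (hD : ∀ i ∈ l, d i ≤ D) (hmin : (l.map fun i => if d i = e then m i else 0).sum ≠ 0)
    (hmax : (l.map fun i => if d i = D then m i else 0).sum ≠ 0)
    (hrel : (l.map fun i => z ^ (-d i) * h ^ m i * z ^ d i).prod = 1) :
    ∃ lam : ℝ, 0 < lam ∧ (l.map fun i => (m i : ℝ) * lam ^ d i).sum = 0 := by
  rcases hh.lt_or_gt with hlt | hgt
  · have hneg (c : ℤ) : (l.map fun i => if d i = c then -m i else 0).sum =
        -(l.map fun i => if d i = c then m i else 0).sum := by
      rw [← List.sum_map_neg]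
      simp only [neg_ite, neg_zero]
    obtain ⟨lam, hlam, hsum⟩ := exists_pos_sum_eq_zero_of_one_lt (h := h⁻¹) (m := fun i => -m i)
      (one_lt_inv'.2 hlt) he hD (by rwa [hneg, neg_ne_zero]) (by rwa [hneg, neg_ne_zero])
      (by simpa [inv_zpow'] using hrel)
    exact ⟨lam, hlam, by simpa [List.sum_map_neg] using hsum⟩
  · exact exists_pos_sum_eq_zero_of_one_lt hgt he hD hmin hmax hrel

end Relation

theorem aeval_sum_C_mul_X_pow_toNat_sub {ι : Type*} (s : Finset ι) (m d : ι → ℤ) {e : ℤ}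
    (he : ∀ i ∈ s, e ≤ d i) {x : ℝ} (hx : x ≠ 0) :
    aeval x (∑ i ∈ s, C (m i) * X ^ (d i - e).toNat) = x ^ (-e) * ∑ i ∈ s, (m i : ℝ) * x ^ d i := by
  simp only [map_sum, map_mul, map_pow, aeval_X, eq_intCast, map_intCast, Finset.mul_sum]
  refine Finset.sum_congr rfl fun i hi => ?_
  rw [← zpow_natCast, Int.toNat_of_nonneg (sub_nonneg.2 (he i hi)), zpow_sub₀ hx, zpow_neg]
  ring

theorem biordered_rel_implies_positive_root_general
    {G : Type*} [Group G]
    (lt : G → G → Prop) (hlt : IsStrictTotalOrder G lt)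
    (hbi : ∀ a b c : G, lt a b → lt (c * a) (c * b) ∧ lt (a * c) (b * c))
    (h z : G) (hh : h ≠ 1)
    (n : ℕ) (m d : Fin n → ℤ)
    (e D : ℤ)
    (he : IsLeast (Set.range d) e) (hD : IsGreatest (Set.range d) D)
    (htidyE : (∑ i ∈ Finset.univ.filter fun i => d i = e, m i) ≠ 0)
    (htidyD : (∑ i ∈ Finset.univ.filter fun i => d i = D, m i) ≠ 0)
    (hrel : ((List.finRange n).map fun i => z ^ (-(d i)) * h ^ (m i) * z ^ (d i)).prod = 1) :
    ∃ lam : ℝ, 0 < lam ∧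
      Polynomial.aeval lam
        (∑ i : Fin n, Polynomial.C (m i) * Polynomial.X ^ (d i - e).toNat) = 0 := by
  classical
  let _ : LinearOrder G := linearOrderOfSTO lt
  have : MulLeftStrictMono G := ⟨fun c _ _ hab => (hbi _ _ c hab).1⟩
  have : MulRightStrictMono G := ⟨fun c _ _ hab => (hbi _ _ c hab).2⟩
  have := mulLeftMono_of_mulLeftStrictMono G
  have := mulRightMono_of_mulRightStrictMono G
  have htidy (c : ℤ) : ∑ i ∈ Finset.univ.filter fun i => d i = c, m i =
      ((List.finRange n).map fun i => if d i = c then m i else 0).sum := by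
    rw [Finset.sum_filter, Fin.sum_univ_def]
  obtain ⟨lam, hlam, hsum⟩ := exists_pos_sum_eq_zero hh (fun i _ => he.2 ⟨i, rfl⟩)
    (fun i _ => hD.2 ⟨i, rfl⟩) (htidy e ▸ htidyE) (htidy D ▸ htidyD) hrel
  refine ⟨lam, hlam, ?_⟩
  rw [aeval_sum_C_mul_X_pow_toNat_sub _ m d (fun i _ => he.2 ⟨i, rfl⟩) hlam.ne', Fin.sum_univ_def,
    hsum, mul_zero]

/-- **Theorem A.** Let `h, z` be non-identity elements of a group `G` equipped with a
bi-order `lt`, and suppose `∏ i, z^(-d i) * h^(m i) * z^(d i) = 1` where the data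
`(m, d)` is tidy (the sums of the `m i` over the indices where `d` attains its minimum `e`,
resp. its maximum `D`, are non-zero).  Then the polynomial
`A(X) = ∑ i, m i * X^(d i - e)` has a positive real root. -/
theorem biordered_rel_implies_positive_root
    {G : Type*} [Group G]
    (lt : G → G → Prop) (hlt : IsStrictTotalOrder G lt)
    (hbi : ∀ a b c : G, lt a b → lt (c * a) (c * b) ∧ lt (a * c) (b * c))
    (h z : G) (hh : h ≠ 1) (hz : z ≠ 1)
    (n : ℕ) (hn : 1 ≤ n) (m d : Fin n → ℤ)
    (e D : ℤ)
    (he : IsLeast (Set.range d) e) (hD : IsGreatest (Set.range d) D)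
    (htidyE : (∑ i ∈ Finset.univ.filter fun i => d i = e, m i) ≠ 0)
    (htidyD : (∑ i ∈ Finset.univ.filter fun i => d i = D, m i) ≠ 0)
    (hrel : ((List.finRange n).map fun i => z ^ (-(d i)) * h ^ (m i) * z ^ (d i)).prod = 1) :
    ∃ lam : ℝ, 0 < lam ∧
      Polynomial.aeval lam
        (∑ i : Fin n, Polynomial.C (m i) * Polynomial.X ^ (d i - e).toNat) = 0 :=
  biordered_rel_implies_positive_root_general lt hlt hbi h z hh n m d e D he hD htidyE htidyD hrel
end

section
/- Let V be a finite-dimensional real vector space and let Φ be a commutative group of linear automorphisms of V such that for every φ ∈ Φ, every complex root of the characteristic polynomial of φ is a positive real number. Then there exists a linear (total) order < on V which is translation-invariant (u < v implies u + w < v + w for all w ∈ V) and is preserved by Φ (u < v implies φ(u) < φ(v) for every φ ∈ Φ). -/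
/-!
Commuting endomorphisms whose minimal polynomials split have a common eigenvector `v`, and
positivity of the eigenvalues makes the ray `ℝ≥0 • v` invariant. By induction on the dimension,
`V ⧸ ℝ ∙ v` carries an invariant maximal positive cone; its lexicographic combination with the
ray is an invariant maximal positive cone of `V`, i.e. a translation-invariant total order
preserved by `Φ`.
-/

open Polynomial Module

namespace Polynomial

def ComplexRootsPositive (p : ℝ[X]) : Prop :=
  ∀ z : ℂ, aeval z p = 0 → z.im = 0 ∧ 0 < z.re

namespace ComplexRootsPositive

variable {p q : ℝ[X]}

theorem of_dvd (hq : q.ComplexRootsPositive) (h : p ∣ q) : p.ComplexRootsPositive := by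
  obtain ⟨r, rfl⟩ := h
  exact fun z hz => hq z (by rw [map_mul, hz, zero_mul])

theorem ne_zero (hp : p.ComplexRootsPositive) : p ≠ 0 := by
  rintro rfl
  simpa using (hp Complex.I (map_zero _)).1

theorem pos_of_isRoot (hp : p.ComplexRootsPositive) {r : ℝ} (hr : p.IsRoot r) : 0 < r := by
  simpa using (hp r (by
    rw [← Complex.coe_algebraMap, aeval_algebraMap_apply_eq_algebraMap_eval, hr.eq_zero,
      map_zero])).2

theorem splits (hp : p.ComplexRootsPositive) : p.Splits := by
  refine .of_splits_map (algebraMap ℝ ℂ) (IsAlgClosed.splits _) fun z hz => ?_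
  have hz0 : aeval z p = 0 := by
    rw [mem_roots (map_ne_zero hp.ne_zero), IsRoot, eval_map_algebraMap] at hz
    exact hz
  exact ⟨z.re, Complex.ext (by simp) (by simp [(hp z hz0).1])⟩

end ComplexRootsPositive

end Polynomial

namespace Module.End

theorem commute_aeval_left_of_commute {R M N : Type*} [CommRing R] [AddCommGroup M] [Module R M]
    [AddCommGroup N] [Module R N] {π : M →ₗ[R] N} {g : End R M} {f : End R N}
    (h : f ∘ₗ π = π ∘ₗ g) (p : R[X]) : aeval f p ∘ₗ π = π ∘ₗ aeval g p := by
  induction p using Polynomial.induction_on' with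
  | add p q hp hq => simp only [map_add, LinearMap.comp_add, LinearMap.add_comp, hp, hq]
  | monomial n a =>
    simp only [aeval_monomial, Module.algebraMap_end_eq_smul_id, LinearMap.comp_smul,
      LinearMap.smul_comp, LinearMap.id_comp, Module.End.mul_eq_comp,
      commute_pow_left_of_commute h n]

variable {K M N : Type*} [Field K] [AddCommGroup M] [Module K M] [AddCommGroup N] [Module K N]

theorem minpoly_dvd_of_injective {π : M →ₗ[K] N} {g : End K M} {f : End K N}
    (hπ : Function.Injective π) (h : f ∘ₗ π = π ∘ₗ g) : minpoly K g ∣ minpoly K f := by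
  refine minpoly.dvd K g (LinearMap.ext fun x => hπ ?_)
  simpa using (LinearMap.congr_fun (commute_aeval_left_of_commute h (minpoly K f)) x).symm

theorem minpoly_dvd_of_surjective {π : M →ₗ[K] N} {g : End K M} {f : End K N}
    (hπ : Function.Surjective π) (h : f ∘ₗ π = π ∘ₗ g) : minpoly K f ∣ minpoly K g := by
  refine minpoly.dvd K f (LinearMap.ext fun y => ?_)
  obtain ⟨x, rfl⟩ := hπ y
  simpa using LinearMap.congr_fun (commute_aeval_left_of_commute h (minpoly K g)) x

variable [FiniteDimensional K M]

theorem exists_hasEigenvalue_of_splits [Nontrivial M] {f : End K M}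
    (hf : (minpoly K f).Splits) : ∃ μ, f.HasEigenvalue μ := by
  obtain ⟨μ, hμ⟩ :=
    hf.exists_eval_eq_zero (minpoly.degree_pos (Algebra.IsIntegral.isIntegral f)).ne'
  exact ⟨μ, hasEigenvalue_iff_isRoot.mpr hμ⟩

theorem exists_eigenvector_mem_of_le_comap {f : End K M} (hf : (minpoly K f).Splits)
    {W : Submodule K M} (hW : W ≠ ⊥) (hWf : W ≤ W.comap f) :
    ∃ μ : K, ∃ x ∈ W, x ≠ 0 ∧ f x = μ • x := by
  have : Nontrivial W := Submodule.nontrivial_iff_ne_bot.mpr hW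
  have hdvd : minpoly K (f.restrict hWf) ∣ minpoly K f :=
    minpoly_dvd_of_injective W.injective_subtype (LinearMap.ext fun _ => rfl)
  obtain ⟨μ, hμ⟩ := exists_hasEigenvalue_of_splits
    (hf.of_dvd (minpoly.ne_zero (Algebra.IsIntegral.isIntegral f)) hdvd)
  obtain ⟨⟨x, hxW⟩, hx⟩ := hμ.exists_hasEigenvector
  refine ⟨μ, x, hxW, by simpa using hx.2, ?_⟩
  simpa using congrArg Subtype.val hx.apply_eq_smul

theorem exists_forall_apply_eq_smul_of_commute [Nontrivial M] {ι : Type*} (f : ι → End K M)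
    (hcomm : ∀ i j, Commute (f i) (f j)) (hsplit : ∀ i, (minpoly K (f i)).Splits) :
    ∃ (v : M) (μ : ι → K), v ≠ 0 ∧ ∀ i, f i v = μ i • v := by
  obtain ⟨W, ⟨hW, hWf⟩, hWmin⟩ := IsArtinian.set_has_minimal
    {W : Submodule K M | W ≠ ⊥ ∧ ∀ i, W ≤ W.comap (f i)} ⟨⊤, top_ne_bot, fun _ => le_top⟩
  have hscalar : ∀ i, ∃ μ : K, ∀ x ∈ W, f i x = μ • x := by
    intro i
    obtain ⟨μ, x, hxW, hx0, hx⟩ := exists_eigenvector_mem_of_le_comap (hsplit i) hW (hWf i)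
    -- Commutativity makes `W ⊓ eigenspace` invariant, so minimality of `W` forces equality.
    have hE : W ⊓ (f i).eigenspace μ = W := by
      refine eq_of_le_of_not_lt inf_le_left (hWmin _ ⟨?_, fun j => ?_⟩)
      · exact (Submodule.ne_bot_iff _).mpr ⟨x, ⟨hxW, mem_eigenspace_iff.mpr hx⟩, hx0⟩
      · exact fun y hy => ⟨hWf j hy.1, mapsTo_genEigenspace_of_comm (hcomm i j) μ 1 hy.2⟩
    exact ⟨μ, fun y hy => mem_eigenspace_iff.mp (hE.ge hy).2⟩
  choose μ hμ using hscalar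
  obtain ⟨v, hvW, hv0⟩ := (Submodule.ne_bot_iff W).mp hW
  exact ⟨v, μ, hv0, fun i => hμ i v hvW⟩

theorem pos_of_apply_eq_smul {V : Type*} [AddCommGroup V] [Module ℝ V] [FiniteDimensional ℝ V]
    {f : End ℝ V} (hf : (minpoly ℝ f).ComplexRootsPositive) {v : V} (hv : v ≠ 0) {c : ℝ}
    (hfv : f v = c • v) : 0 < c :=
  hf.pos_of_isRoot (hasEigenvalue_iff_isRoot.mp
    (hasEigenvalue_of_hasEigenvector ⟨mem_eigenspace_iff.mpr hfv, hv⟩))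

end Module.End

namespace AddGroupCone

section Lex

variable {G H : Type*} [AddCommGroup G] [AddCommGroup H]

def lex (π : G →+ H) (C : AddGroupCone H) (K : AddGroupCone G) : AddGroupCone G where
  carrier := {x | π x ∈ C ∧ (π x = 0 → x ∈ K)}
  zero_mem' := ⟨by simp [zero_mem], fun _ => zero_mem K⟩
  add_mem' {x y} hx hy := by
    refine ⟨by simpa using add_mem hx.1 hy.1, fun hxy => ?_⟩
    have hsum : π x + π y = 0 := by rwa [← map_add]
    have hx0 : π x = 0 :=
      eq_zero_of_mem_of_neg_mem hx.1 (neg_eq_of_add_eq_zero_right hsum ▸ hy.1)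
    have hy0 : π y = 0 := by rwa [hx0, zero_add] at hsum
    exact add_mem (hx.2 hx0) (hy.2 hy0)
  eq_zero_of_mem_of_neg_mem' {x} hx hnx := by
    have hx0 : π x = 0 := eq_zero_of_mem_of_neg_mem hx.1 (by simpa using hnx.1)
    exact eq_zero_of_mem_of_neg_mem (hx.2 hx0) (hnx.2 (by simp [hx0]))

variable {π : G →+ H} {C : AddGroupCone H} {K : AddGroupCone G}

theorem hasMemOrNegMem_lex [HasMemOrNegMem C] (hK : ∀ x, π x = 0 → x ∈ K ∨ -x ∈ K) :
    HasMemOrNegMem (lex π C K) where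
  mem_or_neg_mem x := by
    by_cases hx : π x = 0
    · rcases hK x hx with h | h
      · exact .inl ⟨by simp [hx, zero_mem], fun _ => h⟩
      · exact .inr ⟨by simp [hx, zero_mem], fun _ => h⟩
    · rcases mem_or_neg_mem C (π x) with h | h
      · exact .inl ⟨h, fun h0 => absurd h0 hx⟩
      · exact .inr ⟨by simpa using h, fun h0 => absurd (by simpa using h0) hx⟩

theorem map_mem_lex {φ : G → G} {ψ : H →+ H} (hψ : Function.Injective ψ)
    (hπ : ∀ x, π (φ x) = ψ (π x)) (hC : ∀ y ∈ C, ψ y ∈ C) (hK : ∀ x ∈ K, φ x ∈ K)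
    {x : G} (hx : x ∈ lex π C K) : φ x ∈ lex π C K := by
  refine ⟨hπ x ▸ hC _ hx.1, fun h0 => hK x (hx.2 ?_)⟩
  rw [hπ] at h0
  exact hψ (h0.trans (map_zero ψ).symm)

end Lex

section Ray

variable {𝕜 V : Type*} [Field 𝕜] [LinearOrder 𝕜] [IsStrictOrderedRing 𝕜] [AddCommGroup V]
  [Module 𝕜 V] {v : V}

def ray (hv : v ≠ 0) : AddGroupCone V where
  carrier := {x | ∃ t : 𝕜, 0 ≤ t ∧ t • v = x}
  zero_mem' := ⟨0, le_rfl, zero_smul 𝕜 v⟩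
  add_mem' := by
    rintro _ _ ⟨s, hs, rfl⟩ ⟨t, ht, rfl⟩
    exact ⟨s + t, add_nonneg hs ht, add_smul s t v⟩
  eq_zero_of_mem_of_neg_mem' := by
    rintro _ ⟨s, hs, rfl⟩ ⟨t, ht, hts⟩
    have : (s + t) • v = 0 := by rw [add_smul, hts, add_neg_cancel]
    have hst : s + t = 0 := (smul_eq_zero.mp this).resolve_right hv
    simp [show s = 0 by linarith]

theorem mem_ray_or_neg_mem_ray (hv : v ≠ 0) {x : V} (hx : x ∈ 𝕜 ∙ v) :
    x ∈ ray (𝕜 := 𝕜) hv ∨ -x ∈ ray (𝕜 := 𝕜) hv := by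
  obtain ⟨t, rfl⟩ := Submodule.mem_span_singleton.mp hx
  rcases le_total 0 t with ht | ht
  · exact .inl ⟨t, ht, rfl⟩
  · exact .inr ⟨-t, neg_nonneg.mpr ht, neg_smul t v⟩

theorem map_mem_ray (hv : v ≠ 0) {f : V →ₗ[𝕜] V} {c : 𝕜} (hc : 0 ≤ c) (hfv : f v = c • v)
    {x : V} (hx : x ∈ ray (𝕜 := 𝕜) hv) : f x ∈ ray (𝕜 := 𝕜) hv := by
  obtain ⟨t, ht, rfl⟩ := hx
  exact ⟨t * c, mul_nonneg ht hc, by rw [map_smul, hfv, smul_smul]⟩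

end Ray

end AddGroupCone

theorem exists_maximal_addGroupCone_invariant {V : Type*} [AddCommGroup V] [Module ℝ V]
    [FiniteDimensional ℝ V] {ι : Type*} (φ : ι → V ≃ₗ[ℝ] V) (hcomm : ∀ i j, Commute (φ i) (φ j))
    (hφ : ∀ i, (minpoly ℝ (φ i).toLinearMap).ComplexRootsPositive) :
    ∃ C : AddGroupCone V, HasMemOrNegMem C ∧ ∀ i, ∀ x ∈ C, φ i x ∈ C := by
  induction hn : finrank ℝ V using Nat.strong_induction_on generalizing V with
  | _ n ih =>
  rcases subsingleton_or_nontrivial V with hV | hV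
  · exact ⟨⟨⊥, fun h _ => h⟩, ⟨fun x => .inl (Subsingleton.elim x 0)⟩,
      fun i x _ => Subsingleton.elim (φ i x) 0⟩
  obtain ⟨v, μ, hv0, hv⟩ := End.exists_forall_apply_eq_smul_of_commute
    (fun i => (φ i).toLinearMap)
    (fun i j => (hcomm i j).map LinearEquiv.automorphismGroup.toLinearMapMonoidHom)
    (fun i => (hφ i).splits)
  simp only [LinearEquiv.coe_coe] at hv
  have hμ : ∀ i, 0 < μ i := fun i => End.pos_of_apply_eq_smul (hφ i) hv0 (hv i)
  set L := ℝ ∙ v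
  have hL : ∀ i, L.map (φ i : V →ₗ[ℝ] V) = L := fun i => by
    rw [Submodule.map_span, Set.image_singleton, LinearEquiv.coe_coe, hv i,
      Submodule.span_singleton_smul_eq (hμ i).ne'.isUnit]
  let σ i := Submodule.Quotient.equiv L L (φ i) (hL i)
  have hσ : ∀ i, (σ i).toLinearMap ∘ₗ L.mkQ = L.mkQ ∘ₗ (φ i).toLinearMap := fun i => rfl
  have hcommσ : ∀ i j, Commute (σ i) (σ j) := fun i j => LinearEquiv.ext fun q =>
    Submodule.Quotient.induction_on L q fun x =>
      congrArg L.mkQ (LinearEquiv.congr_fun (hcomm i j) x)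
  have hrank : finrank ℝ (V ⧸ L) < n := by
    have := Submodule.finrank_quotient_add_finrank L
    rw [finrank_span_singleton hv0] at this
    omega
  obtain ⟨C, hC, hCσ⟩ := ih _ hrank σ hcommσ
    (fun i => (hφ i).of_dvd (End.minpoly_dvd_of_surjective L.mkQ_surjective (hσ i))) rfl
  refine ⟨AddGroupCone.lex L.mkQ C (AddGroupCone.ray (𝕜 := ℝ) hv0),
    AddGroupCone.hasMemOrNegMem_lex fun x hx => ?_, fun i x hx => ?_⟩
  · exact AddGroupCone.mem_ray_or_neg_mem_ray hv0 ((Submodule.Quotient.mk_eq_zero L).mp hx)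
  · exact AddGroupCone.map_mem_lex (φ := φ i) (ψ := (σ i : V ⧸ L →+ V ⧸ L)) (σ i).injective
      (fun _ => rfl) (hCσ i)
      (fun _ => AddGroupCone.map_mem_ray (f := (φ i).toLinearMap) hv0 (hμ i).le (hv i)) hx

/-- **Lemma (cf. Lemma 4.2).** Let `V` be a finite-dimensional real vector space and `Φ`
a commutative group of linear automorphisms of `V` all of whose eigenvalues are real and
positive.  Then `V` has a translation-invariant strict total order preserved by `Φ`. -/
theorem exists_invariant_biorder_of_positive_eigenvalues
    {V : Type*} [AddCommGroup V] [Module ℝ V] [FiniteDimensional ℝ V]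
    (Φ : Subgroup (V ≃ₗ[ℝ] V))
    (hcomm : ∀ φ ∈ Φ, ∀ ψ ∈ Φ, φ * ψ = ψ * φ)
    (heig : ∀ φ ∈ Φ, ∀ z : ℂ,
      Polynomial.aeval z (LinearMap.charpoly (φ : V ≃ₗ[ℝ] V).toLinearMap) = 0 →
      z.im = 0 ∧ 0 < z.re) :
    ∃ lt : V → V → Prop, IsStrictTotalOrder V lt ∧
      (∀ u v w : V, lt u v → lt (u + w) (v + w)) ∧
      (∀ φ ∈ Φ, ∀ u v : V, lt u v → lt (φ u) (φ v)) := by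
  obtain ⟨C, hC, hCΦ⟩ := exists_maximal_addGroupCone_invariant (fun φ : Φ => (φ : V ≃ₗ[ℝ] V))
    (fun φ ψ => hcomm φ φ.2 ψ ψ.2)
    (fun φ => ComplexRootsPositive.of_dvd (heig φ φ.2) (LinearMap.minpoly_dvd_charpoly _))
  classical
  let := LinearOrder.mkOfAddGroupCone C
  have := IsOrderedAddMonoid.mkOfCone C
  have hmono : ∀ φ ∈ Φ, Monotone φ := fun φ hφ u v huv => by
    simpa [← map_sub] using hCΦ ⟨φ, hφ⟩ _ huv
  exact ⟨(· < ·), inferInstance, fun u v w h => add_lt_add_left h w,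
    fun φ hφ => (hmono φ hφ).strictMono_of_injective φ.injective⟩
end

section
/- Let H be a group of finite Prüfer rank and let L be a subgroup of H such that the index |H : L·[H,H]| is finite. Then for every n > 0 the index |H : L·γ_{n+1}(H)| is finite, where γ_n(H) denotes the lower central series (γ_1(H) = H, γ_{n+1}(H) = [γ_n(H), H]). In particular, if in addition H is nilpotent, then |H : L| is finite. -/
/-- A group has finite Prüfer rank if there is an integer `r` such that every finitely
generated subgroup can be generated by `r` elements. -/
def HasFinitePruferRank (H : Type*) [Group H] : Prop :=
  ∃ r : ℕ, ∀ S : Subgroup H, S.FG →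
    ∃ T : Finset H, T.card ≤ r ∧ Subgroup.closure (T : Set H) = S

/-!
Induction along the lower central series. Passing to `G ⧸ γ_{n+2}`, the step from `L·γ_{n+1}`
to `L·γ_{n+2}` reduces to: if `Z = ⁅A, G⁆` is central and `L·Z` has finite index, then so does
`L`. For `a ∈ A` the commutator `⁅a, g⁆` is bilinear, so if all `e`-th powers lie in `L·Z`, then
`⁅a, g⁆ ^ (e * e) = ⁅a ^ e, g ^ e⁆ = ⁅l * z, l' * z'⁆ = ⁅l, l'⁆ ∈ L`. Hence `Z ⧸ (L ⊓ Z)` is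
abelian of finite exponent and of finite rank, so finite: a subgroup generated by `r` elements of
an abelian group of exponent `m` has at most `m ^ r` elements. Finally `|L·Z : L| = |Z : L ⊓ Z|`.
-/

open scoped commutatorElement Pointwise

namespace Subgroup

variable {G : Type*} [Group G]

theorem normal_of_le_center {Z : Subgroup G} (h : Z ≤ center G) : Z.Normal :=
  ⟨fun z hz g => by rwa [mem_center_iff.mp (h hz) g, mul_inv_cancel_right]⟩

theorem relIndex_sup_of_normal_right (H K : Subgroup G) [K.Normal] :
    H.relIndex (H ⊔ K) = H.relIndex K := by
  let ι := quotientSubgroupOfEmbeddingOfLE H (le_sup_right : K ≤ H ⊔ K)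
  have hι : Function.Surjective ι := by
    intro q
    induction q using QuotientGroup.induction_on with
    | H m =>
      obtain ⟨k, hk, h, hh, hkh⟩ : (m : G) ∈ (K : Set G) * (H : Set G) := by
        rw [← normal_mul, sup_comm]; exact m.2
      refine ⟨QuotientGroup.mk ⟨k, hk⟩, ?_⟩
      rw [quotientSubgroupOfEmbeddingOfLE_apply_mk, QuotientGroup.eq, mem_subgroupOf]
      simpa [← hkh] using hh
  exact (Nat.card_congr (Equiv.ofBijective ι ⟨ι.injective, hι⟩)).symm

theorem index_map_mk' (H N : Subgroup G) [N.Normal] :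
    (H.map (QuotientGroup.mk' N)).index = (H ⊔ N).index := by
  rw [index_map, QuotientGroup.ker_mk',
    MonoidHom.range_eq_top_of_surjective _ (QuotientGroup.mk'_surjective N), index_top, mul_one]

theorem pow_mem_of_mem_closure_of_le_center {S : Set G} {L : Subgroup G} {n : ℕ}
    (hS : closure S ≤ center G) (h : ∀ s ∈ S, s ^ n ∈ L) {z : G} (hz : z ∈ closure S) :
    z ^ n ∈ L := by
  induction hz using closure_induction with
  | mem s hs => exact h s hs
  | one => simp
  | mul x y hx _ hxL hyL =>
    rw [(show Commute x y from (mem_center_iff.mp (hS hx) y).symm).mul_pow]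
    exact mul_mem hxL hyL
  | inv x _ hxL => rw [inv_pow]; exact inv_mem hxL

theorem coe_closure_finset_subset_range_prod_pow {Q : Type*} [CommGroup Q] {m : ℕ} (hm : 0 < m)
    (hpow : ∀ x : Q, x ^ m = 1) (T : Finset Q) :
    (closure (T : Set Q) : Set Q) ⊆
      Set.range fun b : T → Fin m => ∏ t : T, (t : Q) ^ (b t : ℕ) := by
  intro x hx
  obtain ⟨a, rfl⟩ := mem_closure_iff_of_fintype.mp hx
  have hm' : (0 : ℤ) < m := by exact_mod_cast hm
  have emod_nonneg (t : T) := Int.emod_nonneg (a t) hm'.ne'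
  have emod_lt (t : T) := Int.emod_lt_of_pos (a t) hm'
  refine ⟨fun t => ⟨(a t % m).toNat, by have := emod_lt t; omega⟩,
    Finset.prod_congr rfl fun t _ => ?_⟩
  rw [zpow_eq_zpow_emod' (a t) (hpow t), ← Int.toNat_of_nonneg (emod_nonneg t), zpow_natCast]

end Subgroup

section Commutator

variable {G : Type*} [Group G]
open Subgroup

theorem commutatorElement_mul_mul_of_mem_center {z w : G} (hz : z ∈ center G)
    (hw : w ∈ center G) (a b : G) : ⁅a * z, b * w⁆ = ⁅a, b⁆ := by
  have hz' : ⁅z, b * w⁆ = 1 :=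
    commutatorElement_eq_one_iff_mul_comm.mpr (mem_center_iff.mp hz _).symm
  have hw' : ⁅a, w⁆ = 1 := commutatorElement_eq_one_iff_mul_comm.mpr (mem_center_iff.mp hw _)
  rw [commutatorElement_mul_left_eq_conj_mul, hz', mul_one, mul_inv_cancel,
    one_mul, commutatorElement_mul_right_eq_mul_conj, hw', mul_one, mul_inv_cancel_right]

theorem commutatorElement_pow_pow_of_commutator_le_center {A : Subgroup G}
    (hA : ⁅A, ⊤⁆ ≤ center G) {a : G} (ha : a ∈ A) (g : G) (m n : ℕ) :
    ⁅a ^ m, g ^ n⁆ = ⁅a, g⁆ ^ (m * n) := by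
  have central : ∀ x ∈ A, ∀ y : G, ⁅x, y⁆ ∈ center G := fun x hx y =>
    hA (commutator_mem_commutator hx (mem_top y))
  have pow_right : ∀ x ∈ A, ∀ k : ℕ, ⁅x, g ^ k⁆ = ⁅x, g⁆ ^ k := by
    intro x hx k
    induction k with
    | zero => simp
    | succ k ih =>
      rw [pow_succ, commutatorElement_mul_right_eq_mul_conj, ih, mul_assoc (⁅x, g⁆ ^ k),
        mem_center_iff.mp (central x hx g), ← mul_assoc, mul_inv_cancel_right, pow_succ]
  have pow_left : ∀ k : ℕ, ⁅a ^ k, g⁆ = ⁅a, g⁆ ^ k := by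
    intro k
    induction k with
    | zero => simp
    | succ k ih =>
      rw [pow_succ', commutatorElement_mul_left_eq_conj_mul,
        mem_center_iff.mp (central _ (pow_mem ha k) g), mul_inv_cancel_right, ih, pow_succ]
  rw [pow_right _ (pow_mem ha m), pow_left, pow_mul]

end Commutator

namespace HasFinitePruferRank

open Subgroup

variable {G : Type*} [Group G]

theorem of_surjective {Q : Type*} [Group Q] (h : HasFinitePruferRank G) (f : G →* Q)
    (hf : Function.Surjective f) : HasFinitePruferRank Q := by
  classical
  obtain ⟨r, hr⟩ := h
  refine ⟨r, fun S ⟨A, hA⟩ => ?_⟩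
  obtain ⟨T, hTr, hT⟩ := hr _ ⟨A.image (Function.surjInv hf), rfl⟩
  refine ⟨T.image f, Finset.card_image_le.trans hTr, ?_⟩
  rw [Finset.coe_image, ← MonoidHom.map_closure, hT, MonoidHom.map_closure, Finset.coe_image,
    Set.image_image]
  simp [Function.surjInv_eq hf, hA]

theorem subgroup (h : HasFinitePruferRank G) (K : Subgroup G) : HasFinitePruferRank K := by
  classical
  obtain ⟨r, hr⟩ := h
  refine ⟨r, fun S ⟨A, hA⟩ => ?_⟩
  obtain ⟨T, hTr, hT⟩ := hr (S.map K.subtype)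
    ⟨A.image K.subtype, by rw [Finset.coe_image, ← MonoidHom.map_closure, hA]⟩
  have hTK : ∀ t ∈ T, t ∈ K := fun t ht =>
    map_subtype_le S (hT ▸ subset_closure ht)
  have hcard : (T.subtype (· ∈ K)).card ≤ T.card :=
    Finset.card_subtype (· ∈ K) T ▸ Finset.card_filter_le T _
  refine ⟨T.subtype (· ∈ K), hcard.trans hTr, ?_⟩
  apply map_injective K.subtype_injective
  rw [← hT, MonoidHom.map_closure]
  congr 1
  ext x
  simpa using hTK x

theorem finite_of_exponentExists {Q : Type*} [CommGroup Q] (h : HasFinitePruferRank Q)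
    (hQ : Monoid.ExponentExists Q) : Finite Q := by
  classical
  obtain ⟨m, hm, hpow⟩ := hQ
  obtain ⟨r, hr⟩ := h
  by_contra hfin
  have := not_finite_iff_infinite.mp hfin
  obtain ⟨s, hs⟩ := Infinite.exists_subset_card_eq Q (m ^ r + 1)
  obtain ⟨T, hTr, hT⟩ := hr (closure s) ⟨s, rfl⟩
  have hsub : s ⊆ Finset.univ.image fun b : T → Fin m => ∏ t : T, (t : Q) ^ (b t : ℕ) := by
    intro x hx
    obtain ⟨b, hb⟩ := coe_closure_finset_subset_range_prod_pow hm hpow T (hT ▸ subset_closure hx)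
    exact Finset.mem_image.mpr ⟨b, Finset.mem_univ b, hb⟩
  have hcard := (Finset.card_le_card hsub).trans Finset.card_image_le
  rw [Finset.card_univ, Fintype.card_fun, Fintype.card_fin, Fintype.card_coe, hs] at hcard
  have := Nat.pow_le_pow_right hm hTr
  omega

theorem finiteIndex_of_pow_mem {Q : Type*} [CommGroup Q] (h : HasFinitePruferRank Q)
    {W : Subgroup Q} {m : ℕ} (hm : 0 < m) (hW : ∀ x, x ^ m ∈ W) : W.FiniteIndex := by
  have : Finite (Q ⧸ W) :=
    (h.of_surjective _ (QuotientGroup.mk'_surjective W)).finite_of_exponentExists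
      ⟨m, hm, fun x => QuotientGroup.induction_on x fun x => by
        rw [← QuotientGroup.mk_pow, QuotientGroup.eq_one_iff]; exact hW x⟩
  exact finiteIndex_of_finite_quotient

theorem finiteIndex_of_finiteIndex_sup_commutator_le_center (hG : HasFinitePruferRank G)
    {A L : Subgroup G} (hA : ⁅A, ⊤⁆ ≤ center G) (hL : (L ⊔ ⁅A, ⊤⁆).FiniteIndex) :
    L.FiniteIndex := by
  set Z := ⁅A, (⊤ : Subgroup G)⁆
  have : Z.Normal := normal_of_le_center hA
  set e := (L ⊔ Z).index.factorial
  have he : 0 < e := Nat.factorial_pos _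
  have pow_mem_sup (g : G) : ∃ l ∈ L, ∃ z ∈ Z, l * z = g ^ e := by
    have := pow_mem_of_index_ne_zero_of_dvd hL.index_ne_zero g
      fun k hk hkle => Nat.dvd_factorial hk hkle
    rwa [← SetLike.mem_coe, mul_normal, Set.mem_mul] at this
  have gen_pow_mem :
      ∀ z ∈ {x | ∃ a ∈ A, ∃ g ∈ (⊤ : Subgroup G), ⁅a, g⁆ = x}, z ^ (e * e) ∈ L := by
    rintro _ ⟨a, ha, g, -, rfl⟩
    obtain ⟨l, hl, z, hz, hlz⟩ := pow_mem_sup a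
    obtain ⟨l', hl', z', hz', hlz'⟩ := pow_mem_sup g
    rw [← commutatorElement_pow_pow_of_commutator_le_center hA ha, ← hlz, ← hlz',
      commutatorElement_mul_mul_of_mem_center (hA hz) (hA hz'), commutatorElement_def]
    exact mul_mem (mul_mem (mul_mem hl hl') (inv_mem hl)) (inv_mem hl')
  let _ : CommGroup Z :=
    { Z.toGroup with mul_comm := fun x y => Subtype.ext (mem_center_iff.mp (hA x.2) y).symm }
  have hZL : (L.subgroupOf Z).FiniteIndex :=
    (hG.subgroup Z).finiteIndex_of_pow_mem (Nat.mul_pos he he) fun z =>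
      pow_mem_of_mem_closure_of_le_center (commutator_def A ⊤ ▸ hA) gen_pow_mem z.2
  have := relIndex_mul_index (le_sup_left : L ≤ L ⊔ Z)
  rw [relIndex_sup_of_normal_right] at this
  exact ⟨this ▸ mul_ne_zero hZL.index_ne_zero hL.index_ne_zero⟩

theorem finiteIndex_sup_lowerCentralSeries (hG : HasFinitePruferRank G) {L : Subgroup G}
    (hL : (L ⊔ commutator G).FiniteIndex) (n : ℕ) :
    (L ⊔ (⊤ : Subgroup G).lowerCentralSeries (n + 1)).FiniteIndex := by
  induction n with
  | zero => rwa [zero_add, top_lowerCentralSeries_one]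
  | succ n ih =>
    set N := (⊤ : Subgroup G).lowerCentralSeries (n + 2)
    let π := QuotientGroup.mk' N
    have lcs_quotient (k : ℕ) : (⊤ : Subgroup (G ⧸ N)).lowerCentralSeries k =
        ((⊤ : Subgroup G).lowerCentralSeries k).map π := by
      rw [map_lowerCentralSeries, map_top_of_surjective _ (QuotientGroup.mk'_surjective N)]
    have hcenter : ⁅(⊤ : Subgroup (G ⧸ N)).lowerCentralSeries n, ⊤⁆ ≤ center (G ⧸ N) := by
      rw [← commutator_top_right_eq_bot_iff_le_center, ← Subgroup.lowerCentralSeries_succ,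
        ← Subgroup.lowerCentralSeries_succ, lcs_quotient, Subgroup.map_eq_bot_iff,
        QuotientGroup.ker_mk']
    have hN : N ≤ (⊤ : Subgroup G).lowerCentralSeries (n + 1) :=
      Subgroup.lowerCentralSeries_antitone _ (Nat.le_succ _)
    have hsup : (L.map π ⊔ ⁅(⊤ : Subgroup (G ⧸ N)).lowerCentralSeries n, ⊤⁆).FiniteIndex := by
      rw [← Subgroup.lowerCentralSeries_succ, lcs_quotient, ← Subgroup.map_sup, finiteIndex_iff,
        index_map_mk', sup_of_le_left (hN.trans le_sup_right)]
      exact ih.index_ne_zero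
    have := finiteIndex_of_finiteIndex_sup_commutator_le_center
      (hG.of_surjective π (QuotientGroup.mk'_surjective N)) hcenter hsup
    rw [finiteIndex_iff, index_map_mk'] at this
    exact ⟨this⟩

end HasFinitePruferRank

/-- **Lemma 5.1(b).** Let `H` have finite Prüfer rank and `L ≤ H` with `|H : L[H,H]|`
finite.  Then `|H : L·γ_{n+1}(H)|` is finite for all `n > 0`; in particular, if `H` is
nilpotent, then `|H : L|` is finite.  (Note `γ_{n+1}(H) = lowerCentralSeries H n`.) -/
theorem finite_index_join_lcs
    {H : Type*} [Group H] (hH : HasFinitePruferRank H)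
    (L : Subgroup H) (hL : (L ⊔ commutator H).FiniteIndex) :
    (∀ n : ℕ, 0 < n → (L ⊔ (⊤ : Subgroup H).lowerCentralSeries n).FiniteIndex) ∧
      (Group.IsNilpotent H → L.FiniteIndex) := by
  have joins := hH.finiteIndex_sup_lowerCentralSeries hL
  refine ⟨fun n hn => Nat.succ_pred_eq_of_pos hn ▸ joins (n - 1), fun hnil => ?_⟩
  obtain ⟨n, hn⟩ := Subgroup.nilpotent_iff_lowerCentralSeries.mp hnil
  have hbot : (⊤ : Subgroup H).lowerCentralSeries (n + 1) = ⊥ :=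
    le_bot_iff.mp (hn ▸ Subgroup.lowerCentralSeries_antitone ⊤ n.le_succ)
  simpa only [hbot, sup_bot_eq] using joins n
end

section
/- Let H, A, B be groups with injective homomorphisms φ : H → A and ψ : H → B, and let G = A *_H B be the free product of A and B amalgamating H (the pushout of φ and ψ in the category of groups). Let b ∈ B be an element that is indivisible in B and is not conjugate in B to any element of ψ(H). Then the image of b under the canonical homomorphism B → G is an indivisible element of G. -/
/-!
Any amalgamated product maps to Mathlib's `Monoid.PushoutI` of the family `A, B` over `H`, and
indivisibility pulls back along homomorphisms, so it suffices to argue there with reduced words.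
By cyclic reduction, every element `v` is conjugate to an element of a factor or to a cyclically
reduced word (first and last letter in different factors), whose powers are again cyclically
reduced. A conjugate of a letter `b ∈ B` that is not conjugate into `H` is either a `B`-conjugate
of `b` or a reduced word whose sequence of factors is a palindrome, hence not cyclically reduced.
So `v ^ n = b` forces `v` to be conjugate to some `x ∈ B` with `x ^ n` conjugate to `b` in `B`.
-/

universe u v w x

/-- `P`, together with `ja : A →* P` and `jb : B →* P`, is the free product of `A` and `B`
amalgamating `H` along `φ : H →* A` and `ψ : H →* B`, i.e. the pushout of `φ` and `ψ` in
the category of groups. -/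
def IsAmalgamatedFreeProduct {H : Type u} {A : Type v} {B : Type w} {P : Type x}
    [Group H] [Group A] [Group B] [Group P]
    (φ : H →* A) (ψ : H →* B) (ja : A →* P) (jb : B →* P) : Prop :=
  ja.comp φ = jb.comp ψ ∧
    ∀ (Q : Type (max u v w x)) [Group Q] (f : A →* Q) (g : B →* Q),
      f.comp φ = g.comp ψ → ∃! h : P →* Q, h.comp ja = f ∧ h.comp jb = g

/-- An element `g` of a group is indivisible if it is not a proper power. -/
def Indivisible {G : Type*} [Group G] (g : G) : Prop :=
  ¬ ∃ (v : G) (n : ℕ), 1 < n ∧ v ^ n = g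

namespace Monoid.PushoutI

open Function

variable {ι : Type*} {G : ι → Type*} {H : Type*} [∀ i, Group (G i)] [Group H]
  {φ : ∀ i, H →* G i}

variable (φ) in
def prodList (L : List (Σ i, G i)) : PushoutI φ :=
  (L.map fun l => of l.1 l.2).prod

variable (φ) in
def ReducedList (L : List (Σ i, G i)) : Prop :=
  (∀ l ∈ L, l.2 ∉ (φ l.1).range) ∧ (L.map Sigma.fst).IsChain (· ≠ ·)

variable (φ) in
def CyclicallyReducedList (L : List (Σ i, G i)) : Prop :=
  ReducedList φ L ∧ (L.map Sigma.fst).head? ≠ (L.map Sigma.fst).getLast?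

def invList (L : List (Σ i, G i)) : List (Σ i, G i) :=
  L.reverse.map fun l => ⟨l.1, l.2⁻¹⟩

@[simp] theorem prodList_nil : prodList φ [] = 1 := rfl

@[simp] theorem prodList_cons (a : Σ i, G i) (L : List (Σ i, G i)) :
    prodList φ (a :: L) = of a.1 a.2 * prodList φ L :=
  List.prod_cons

@[simp] theorem prodList_append (L₁ L₂ : List (Σ i, G i)) :
    prodList φ (L₁ ++ L₂) = prodList φ L₁ * prodList φ L₂ := by
  simp [prodList]

@[simp] theorem prodList_invList (L : List (Σ i, G i)) :
    prodList φ (invList L) = (prodList φ L)⁻¹ := by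
  induction L with
  | nil => simp [invList]
  | cons a L ih => simp_all [invList]

theorem map_fst_invList (L : List (Σ i, G i)) :
    (invList L).map Sigma.fst = (L.map Sigma.fst).reverse := by
  simp [invList, List.map_reverse]

theorem base_mul_prodList_cons (h : H) (a : Σ i, G i) (L : List (Σ i, G i)) :
    base φ h * prodList φ (a :: L) = prodList φ (⟨a.1, φ a.1 h * a.2⟩ :: L) := by
  rw [prodList_cons, prodList_cons, map_mul, of_apply_eq_base, mul_assoc]

namespace ReducedList

variable {L L₁ L₂ : List (Σ i, G i)}

theorem nil : ReducedList φ [] := ⟨by simp, List.isChain_nil⟩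

theorem singleton {i : ι} {g : G i} (hg : g ∉ (φ i).range) : ReducedList φ [⟨i, g⟩] :=
  ⟨by simpa using hg, List.isChain_singleton _⟩

theorem append (h₁ : ReducedList φ L₁) (h₂ : ReducedList φ L₂)
    (h : ∀ i ∈ (L₁.map Sigma.fst).getLast?, ∀ j ∈ (L₂.map Sigma.fst).head?, i ≠ j) :
    ReducedList φ (L₁ ++ L₂) :=
  ⟨fun l hl => (List.mem_append.1 hl).elim (h₁.1 l) (h₂.1 l),
    List.map_append ▸ h₁.2.append h₂.2 h⟩

theorem of_isInfix (hL : ReducedList φ L) (h : L₁ <:+: L) : ReducedList φ L₁ :=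
  ⟨fun l hl => hL.1 l (h.subset hl), hL.2.infix (h.map _)⟩

theorem invList (hL : ReducedList φ L) : ReducedList φ (invList L) := by
  refine ⟨?_, ?_⟩
  · simp only [PushoutI.invList, List.mem_map, List.mem_reverse]
    rintro _ ⟨l, hl, rfl⟩
    simpa using hL.1 l hl
  · rw [map_fst_invList, List.isChain_reverse]
    exact hL.2.imp fun _ _ hab => hab.symm

theorem mul_head {a : Σ i, G i} (hL : ReducedList φ (a :: L)) (h : H) :
    ReducedList φ (⟨a.1, φ a.1 h * a.2⟩ :: L) := by
  refine ⟨?_, hL.2⟩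
  rintro l (_ | ⟨_, hl⟩)
  · simpa [Subgroup.mul_mem_cancel_left] using hL.1 a List.mem_cons_self
  · exact hL.1 l (List.mem_cons_of_mem _ hl)

def toWord (hL : ReducedList φ L) : CoprodI.Word G :=
  ⟨L, fun l hl h1 => hL.1 l hl (h1 ▸ one_mem _), List.isChain_map _ |>.1 hL.2⟩

theorem reduced_toWord (hL : ReducedList φ L) : Reduced φ hL.toWord := hL.1

theorem ofCoprodI_prod_toWord (hL : ReducedList φ L) :
    ofCoprodI hL.toWord.prod = prodList φ L := by
  simp [toWord, CoprodI.Word.prod, prodList, map_list_prod, Function.comp_def]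

end ReducedList

variable {L L₁ L₂ : List (Σ i, G i)}

theorem NormalWord.Transversal.eq_one_of_mem_range (d : NormalWord.Transversal φ) {i : ι} {g : G i}
    (hg : g ∈ d.set i) (hr : g ∈ (φ i).range) : g = 1 := by
  have h₁ := (d.compl i).equiv_snd_eq_self_of_mem_of_one_mem (φ i).range.one_mem hg
  have h₂ := (d.compl i).equiv_snd_eq_one_of_mem_of_one_mem (d.one_mem i) hr
  exact congrArg Subtype.val (h₁.symm.trans h₂)

theorem eq_base_or_eq_prodList (hφ : ∀ i, Injective (φ i)) (v : PushoutI φ) :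
    (∃ h, v = base φ h) ∨ ∃ L, ReducedList φ L ∧ L ≠ [] ∧ v = prodList φ L := by
  classical
  obtain ⟨d⟩ := NormalWord.transversal_nonempty φ hφ
  set w : NormalWord d := v • NormalWord.empty
  have hw : ReducedList φ w.toList :=
    ⟨fun l hl hr => w.ne_one l hl (d.eq_one_of_mem_range (w.normalized l.1 l.2 hl) hr),
      (List.isChain_map _).2 w.chain_ne⟩
  have hv : v = base φ w.head * prodList φ w.toList := by
    rw [← hw.ofCoprodI_prod_toWord]
    exact (by rw [NormalWord.prod_smul, NormalWord.prod_empty, mul_one] : w.prod = v).symm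
  rcases hL : w.toList with _ | ⟨a, L⟩
  · exact .inl ⟨w.head, by simpa [hL] using hv⟩
  · refine .inr ⟨_, (hL ▸ hw).mul_head w.head, List.cons_ne_nil _ _, ?_⟩
    rw [hv, hL, base_mul_prodList_cons]

theorem map_fst_eq_of_prodList_eq (hφ : ∀ i, Injective (φ i)) (h₁ : ReducedList φ L₁)
    (h₂ : ReducedList φ L₂) (h : prodList φ L₁ = prodList φ L₂) :
    L₁.map Sigma.fst = L₂.map Sigma.fst := by
  obtain ⟨d⟩ := NormalWord.transversal_nonempty φ hφ
  obtain ⟨w₁, hw₁, hm₁⟩ := h₁.reduced_toWord.exists_normalWord_prod_eq d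
  obtain ⟨w₂, hw₂, hm₂⟩ := h₂.reduced_toWord.exists_normalWord_prod_eq d
  have hw : w₁ = w₂ := NormalWord.prod_injective <| by
    rw [hw₁, hw₂, h₁.ofCoprodI_prod_toWord, h₂.ofCoprodI_prod_toWord, h]
  exact hm₁.symm.trans (hw ▸ hm₂)

theorem prodList_ne_base (hφ : ∀ i, Injective (φ i)) (hL : ReducedList φ L) (hne : L ≠ [])
    (h : H) : prodList φ L ≠ base φ h := fun heq =>
  hne <| congrArg CoprodI.Word.toList <|
    hL.reduced_toWord.eq_empty_of_mem_range hφ ⟨h, by rw [hL.ofCoprodI_prod_toWord, heq]⟩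

theorem prodList_ne_of (hφ : ∀ i, Injective (φ i)) (hL : ReducedList φ L) (hlen : 2 ≤ L.length)
    {i : ι} (x : G i) : prodList φ L ≠ of i x := by
  intro heq
  by_cases hx : x ∈ (φ i).range
  · obtain ⟨h, rfl⟩ := hx
    exact prodList_ne_base hφ hL (List.ne_nil_of_length_pos (by omega)) h
      (heq.trans (of_apply_eq_base φ i h))
  · have := congrArg List.length <|
      map_fst_eq_of_prodList_eq hφ hL (.singleton hx) (by simpa using heq)
    simp at this
    omega

namespace CyclicallyReducedList

theorem two_le_length (hK : CyclicallyReducedList φ L) : 2 ≤ L.length := by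
  rcases L with _ | ⟨a, _ | ⟨b, L⟩⟩
  · exact absurd rfl hK.2
  · exact absurd rfl hK.2
  · simp

theorem map_fst_ne_nil (hK : CyclicallyReducedList φ L) : L.map Sigma.fst ≠ [] :=
  List.ne_nil_of_length_pos (by simpa using (by have := hK.two_le_length; omega : 0 < L.length))

theorem append (h₁ : CyclicallyReducedList φ L₁) (h₂ : CyclicallyReducedList φ L₂)
    (hhead : (L₁.map Sigma.fst).head? = (L₂.map Sigma.fst).head?)
    (hlast : (L₁.map Sigma.fst).getLast? = (L₂.map Sigma.fst).getLast?) :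
    CyclicallyReducedList φ (L₁ ++ L₂) := by
  refine ⟨h₁.1.append h₂.1 fun i hi j hj hij => h₁.2 ?_, ?_⟩
  · exact hhead.trans (hj.trans (hij ▸ hi.symm))
  · rw [List.map_append, List.head?_append_of_ne_nil _ h₁.map_fst_ne_nil,
      List.getLast?_append_of_ne_nil _ h₂.map_fst_ne_nil, ← hlast]
    exact h₁.2

theorem exists_pow (hK : CyclicallyReducedList φ L) {n : ℕ} (hn : n ≠ 0) :
    ∃ K, CyclicallyReducedList φ K ∧ prodList φ K = prodList φ L ^ n := by
  obtain ⟨n, rfl⟩ := Nat.exists_eq_succ_of_ne_zero hn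
  suffices ∃ K, CyclicallyReducedList φ K ∧ (K.map Sigma.fst).head? = (L.map Sigma.fst).head? ∧
      (K.map Sigma.fst).getLast? = (L.map Sigma.fst).getLast? ∧
      prodList φ K = prodList φ L ^ (n + 1) from
    this.imp fun K hK => ⟨hK.1, hK.2.2.2⟩
  clear hn
  induction n with
  | zero => exact ⟨L, hK, rfl, rfl, (pow_one _).symm⟩
  | succ n ih =>
    obtain ⟨K, hK', hhead, hlast, hprod⟩ := ih
    refine ⟨K ++ L, hK'.append hK hhead hlast, ?_, ?_, by rw [prodList_append, hprod, ← pow_succ]⟩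
    · rw [List.map_append, List.head?_append_of_ne_nil _ hK'.map_fst_ne_nil, hhead]
    · rw [List.map_append, List.getLast?_append_of_ne_nil _ hK.map_fst_ne_nil]

end CyclicallyReducedList

theorem exists_isConj_of_or_cyclicallyReduced :
    ∀ L : List (Σ i, G i), ReducedList φ L → L ≠ [] →
      ∃ w, IsConj (prodList φ L) w ∧
        ((∃ i x, w = of i x) ∨ ∃ K, CyclicallyReducedList φ K ∧ w = prodList φ K)
  | [], _, hne => absurd rfl hne
  | ⟨i, g⟩ :: L, hL, _ => by
    rcases L.eq_nil_or_concat' with rfl | ⟨S, ⟨k, g'⟩, rfl⟩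
    · exact ⟨_, .refl _, .inl ⟨i, g, by simp⟩⟩
    by_cases hik : i = k
    swap
    · refine ⟨_, .refl _, .inr ⟨_, ⟨hL, ?_⟩, rfl⟩⟩
      simp only [List.map_cons, List.map_append, List.map_nil, List.head?_cons]
      rw [← List.cons_append, List.getLast?_concat]
      simpa using hik
    subst hik
    have hS : ReducedList φ S := hL.of_isInfix ⟨[⟨i, g⟩], [⟨i, g'⟩], rfl⟩
    have hchain := hL.2
    simp only [List.map_cons, List.map_append, List.map_nil] at hchain
    have hSlast := (List.isChain_append.1 hchain.tail).2.2
    obtain ⟨c, S, rfl⟩ : ∃ c S', S = c :: S' := by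
      rcases S with _ | ⟨c, S⟩
      · simp at hchain
      · exact ⟨c, S, rfl⟩
    -- conjugating by the first letter moves it behind the last one, and the two merge
    have hconj : IsConj (prodList φ (⟨i, g⟩ :: (c :: S ++ [⟨i, g'⟩])))
        (prodList φ (c :: S) * of i (g' * g)) :=
      isConj_iff.2 ⟨(of i g)⁻¹, by simp [mul_assoc]⟩
    by_cases hr : g' * g ∈ (φ i).range
    · obtain ⟨h, hh⟩ := hr
      obtain ⟨w, hw, hform⟩ :=
        exists_isConj_of_or_cyclicallyReduced _ (hS.mul_head h) (List.cons_ne_nil _ _)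
      refine ⟨w, hconj.trans ((isConj_iff.2 ⟨base φ h, ?_⟩).trans hw), hform⟩
      rw [← hh, of_apply_eq_base, ← base_mul_prodList_cons]
      group
    · obtain ⟨w, hw, hform⟩ := exists_isConj_of_or_cyclicallyReduced (c :: S ++ [⟨i, g' * g⟩])
        (hS.append (.singleton hr) (by exact hSlast)) (by simp)
      exact ⟨w, hconj.trans (by simpa [mul_assoc] using hw), hform⟩
termination_by L => L.length

theorem exists_reduced_conj_of_prodList {j : ι} (hL : ReducedList φ L) (y : G j) :
    ∃ M z, ReducedList φ M ∧ (M.map Sigma.fst).getLast? ≠ some j ∧ IsConj y z ∧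
      prodList φ L * of j y * (prodList φ L)⁻¹ = prodList φ M * of j z * (prodList φ M)⁻¹ := by
  induction L using List.reverseRecOn generalizing y with
  | nil => exact ⟨[], y, .nil, by simp, .refl y, rfl⟩
  | append_singleton L a ih =>
    obtain ⟨i, g⟩ := a
    by_cases hij : i = j
    · subst hij
      obtain ⟨M, z, hM, hMj, hz, heq⟩ :=
        ih (hL.of_isInfix (List.prefix_append _ _).isInfix) (g * y * g⁻¹)
      refine ⟨M, z, hM, hMj, (isConj_iff.2 ⟨g, rfl⟩).trans hz, ?_⟩
      simp only [← heq, prodList_append, prodList_cons, prodList_nil, map_mul, map_inv, mul_one,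
        mul_inv_rev, mul_assoc]
    · exact ⟨_, y, hL, by simpa using hij, .refl y, rfl⟩

theorem exists_reduced_conj_of (hφ : ∀ i, Injective (φ i)) {j : ι} (g : PushoutI φ) (y : G j) :
    ∃ M z, ReducedList φ M ∧ (M.map Sigma.fst).getLast? ≠ some j ∧ IsConj y z ∧
      g * of j y * g⁻¹ = prodList φ M * of j z * (prodList φ M)⁻¹ := by
  rcases eq_base_or_eq_prodList hφ g with ⟨h, rfl⟩ | ⟨L, hL, -, rfl⟩
  · refine ⟨[], _, .nil, by simp, isConj_iff.2 ⟨φ j h, rfl⟩, ?_⟩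
    simp [← of_apply_eq_base φ j]
  · exact exists_reduced_conj_of_prodList hL y

theorem eq_of_or_eq_prodList_of_isConj (hφ : ∀ i, Injective (φ i)) {j : ι} {y : G j}
    (hy : ∀ h, ¬IsConj y (φ j h)) {w : PushoutI φ} (hw : IsConj (of j y) w) :
    (∃ z, IsConj y z ∧ w = of j z) ∨
      ∃ F, ReducedList φ F ∧ 2 ≤ F.length ∧
        (F.map Sigma.fst).head? = (F.map Sigma.fst).getLast? ∧ w = prodList φ F := by
  obtain ⟨g, rfl⟩ := isConj_iff.1 hw
  obtain ⟨M, z, hM, hMj, hz, heq⟩ := exists_reduced_conj_of hφ g y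
  rw [heq]
  rcases eq_or_ne M [] with rfl | hne
  · exact .inl ⟨z, hz, by simp⟩
  have hzr : z ∉ (φ j).range := by
    rintro ⟨h, rfl⟩
    exact hy h hz
  have hI : M.map Sigma.fst ≠ [] := by simpa using hne
  -- its index sequence `I ++ j :: I.reverse` is a palindrome
  refine .inr ⟨M ++ ⟨j, z⟩ :: invList M, ?_, ?_, ?_, by simp [mul_assoc]⟩
  · refine hM.append ((ReducedList.singleton hzr).append hM.invList ?_) ?_
    · intro i hi k hk hik
      simp only [List.map_cons, List.map_nil, List.getLast?_singleton, Option.mem_def,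
        Option.some.injEq] at hi
      change k ∈ ((invList M).map Sigma.fst).head? at hk
      rw [map_fst_invList, List.head?_reverse] at hk
      subst hi hik
      exact hMj hk
    · intro i hi k hk hik
      simp only [List.map_cons, List.head?_cons, Option.mem_def, Option.some.injEq] at hk
      subst hk hik
      exact hMj hi
  · have := List.length_pos_iff.2 hne
    simp [invList]
    omega
  · have hIr : (M.map Sigma.fst).reverse ≠ [] := by simpa using hI
    rw [List.map_append, List.map_cons, map_fst_invList, List.head?_append_of_ne_nil _ hI,
      List.getLast?_append_of_ne_nil _ (List.cons_ne_nil _ _), ← List.singleton_append,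
      List.getLast?_append_of_ne_nil _ hIr, List.getLast?_reverse]

section Conjugates

variable (hφ : ∀ i, Injective (φ i)) {j : ι} {y : G j} (hy : ∀ h, ¬IsConj y (φ j h))
include hφ hy

theorem isConj_of_isConj_of_of {x : G j} (h : IsConj (of j y) (of (φ := φ) j x)) :
    IsConj y x := by
  rcases eq_of_or_eq_prodList_of_isConj hφ hy h with ⟨z, hz, hxz⟩ | ⟨F, hF, hlen, -, hxF⟩
  · rwa [of_injective hφ j hxz]
  · exact absurd hxF.symm (prodList_ne_of hφ hF hlen x)

theorem not_isConj_of_of_ne {i : ι} (hij : i ≠ j) (x : G i) :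
    ¬IsConj (of j y) (of (φ := φ) i x) := by
  intro h
  rcases eq_of_or_eq_prodList_of_isConj hφ hy h with ⟨z, hz, hxz⟩ | ⟨F, hF, hlen, -, hxF⟩
  · obtain ⟨h, hh⟩ : of j z ∈ (base φ).range :=
      inf_of_range_eq_base_range hφ hij ▸ ⟨⟨x, hxz⟩, ⟨z, rfl⟩⟩
    rw [← of_apply_eq_base φ j] at hh
    exact hy h (of_injective hφ j hh ▸ hz)
  · exact prodList_ne_of hφ hF hlen x hxF.symm

theorem not_isConj_prodList {K : List (Σ i, G i)} (hK : CyclicallyReducedList φ K) :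
    ¬IsConj (of j y) (prodList φ K) := by
  intro h
  rcases eq_of_or_eq_prodList_of_isConj hφ hy h with ⟨z, -, hz⟩ | ⟨F, hF, -, hFidx, hKF⟩
  · exact prodList_ne_of hφ hK.1 hK.two_le_length z hz
  · exact hK.2 (map_fst_eq_of_prodList_eq hφ hK.1 hF hKF ▸ hFidx)

end Conjugates

theorem indivisible_of (hφ : ∀ i, Injective (φ i)) {j : ι} {y : G j} (hind : Indivisible y)
    (hy : ∀ h, ¬IsConj y (φ j h)) : Indivisible (of (φ := φ) j y) := by
  rintro ⟨v, n, hn, hv⟩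
  have hpow : ∀ w, IsConj v w → IsConj (of j y) (w ^ n) := fun w hw => hv ▸ hw.pow n
  rcases eq_base_or_eq_prodList hφ v with ⟨h, rfl⟩ | ⟨L, hL, hne, rfl⟩
  · refine hy (h ^ n) (isConj_of_isConj_of_of hφ hy ?_)
    rw [of_apply_eq_base, ← hv, map_pow]
  obtain ⟨w, hw, ⟨i, x, rfl⟩ | ⟨K, hK, rfl⟩⟩ := exists_isConj_of_or_cyclicallyReduced L hL hne
  · have hconj := hpow _ hw
    rw [← map_pow] at hconj
    rcases eq_or_ne i j with rfl | hij
    · obtain ⟨c, hc⟩ := isConj_iff.1 (isConj_of_isConj_of_of hφ hy hconj).symm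
      exact hind ⟨c * x * c⁻¹, n, hn, by rw [conj_pow, hc]⟩
    · exact not_isConj_of_of_ne hφ hy hij _ hconj
  · obtain ⟨K', hK', hpowK⟩ := hK.exists_pow (n := n) (by omega)
    exact not_isConj_prodList hφ hy hK' (hpowK ▸ hpow _ hw)

end Monoid.PushoutI

theorem Indivisible.of_map {G K : Type*} [Group G] [Group K] (f : G →* K) {g : G}
    (h : Indivisible (f g)) : Indivisible g :=
  fun ⟨v, n, hn, hv⟩ => h ⟨f v, n, hn, by rw [← map_pow, hv]⟩

section AmalgamatedFreeProduct

variable {H : Type u} {A : Type v} {B : Type w} [Group H] [Group A] [Group B]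

def pairFamily (A : Type v) (B : Type w) : Bool → Type (max v w)
  | false => ULift.{w} A
  | true => ULift.{v} B

instance (A : Type v) (B : Type w) [Group A] [Group B] : ∀ i, Group (pairFamily A B i)
  | false => ULift.group
  | true => ULift.group

def pairHom (φ : H →* A) (ψ : H →* B) : ∀ i, H →* pairFamily A B i
  | false => MulEquiv.ulift.symm.toMonoidHom.comp φ
  | true => MulEquiv.ulift.symm.toMonoidHom.comp ψ

theorem pairHom_injective {φ : H →* A} {ψ : H →* B} (hφ : Function.Injective φ)
    (hψ : Function.Injective ψ) : ∀ i, Function.Injective (pairHom φ ψ i)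
  | false => fun _ _ h => hφ (congrArg ULift.down h)
  | true => fun _ _ h => hψ (congrArg ULift.down h)

theorem IsAmalgamatedFreeProduct.exists_hom_pushoutI {P : Type x} [Group P] {φ : H →* A}
    {ψ : H →* B} {ja : A →* P} {jb : B →* P} (hP : IsAmalgamatedFreeProduct φ ψ ja jb) :
    ∃ θ : P →* Monoid.PushoutI (pairHom φ ψ), ∀ b, θ (jb b) = Monoid.PushoutI.of true ⟨b⟩ := by
  -- the universal property only tests groups in `Type (max u v w x)`
  let up : Monoid.PushoutI (pairHom φ ψ) →* ULift.{max u v w x} (Monoid.PushoutI (pairHom φ ψ)) :=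
    MulEquiv.ulift.symm.toMonoidHom
  obtain ⟨θ, ⟨-, hθ⟩, -⟩ := hP.2 _
    (up.comp ((Monoid.PushoutI.of false).comp MulEquiv.ulift.symm.toMonoidHom))
    (up.comp ((Monoid.PushoutI.of true).comp MulEquiv.ulift.symm.toMonoidHom)) <| by
      refine MonoidHom.ext fun h => ?_
      exact congrArg up ((Monoid.PushoutI.of_apply_eq_base _ false h).trans
        (Monoid.PushoutI.of_apply_eq_base _ true h).symm)
  exact ⟨(MulEquiv.ulift (α := Monoid.PushoutI (pairHom φ ψ))).toMonoidHom.comp θ,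
    fun b => congrArg ULift.down (DFunLike.congr_fun hθ b)⟩

end AmalgamatedFreeProduct

/-- **Lemma 6.5.** Let `G = A *_H B` be a free product with amalgamation (a pushout of
injective homomorphisms `φ : H → A` and `ψ : H → B`), and let `b ∈ B` be indivisible in
`B` and not conjugate in `B` to an element of `ψ(H)`.  Then the image of `b` in `G` is
indivisible. -/
theorem indivisible_in_amalgamated_product
    {H : Type u} {A : Type v} {B : Type w} {P : Type x}
    [Group H] [Group A] [Group B] [Group P]
    (φ : H →* A) (ψ : H →* B) (hφ : Function.Injective φ) (hψ : Function.Injective ψ)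
    (ja : A →* P) (jb : B →* P)
    (hP : IsAmalgamatedFreeProduct φ ψ ja jb)
    (b : B) (hb : Indivisible b)
    (hconj : ¬ ∃ (c : B) (h : H), c⁻¹ * b * c = ψ h) :
    Indivisible (jb b) := by
  obtain ⟨θ, hθ⟩ := hP.exists_hom_pushoutI
  refine Indivisible.of_map θ ?_
  rw [hθ]
  refine Monoid.PushoutI.indivisible_of (pairHom_injective hφ hψ)
    (Indivisible.of_map (MulEquiv.ulift (α := B)).toMonoidHom hb) fun h hbh => hconj ?_
  obtain ⟨c, hc⟩ := isConj_iff.1 ((MulEquiv.ulift (α := B)).toMonoidHom.map_isConj hbh)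
  exact ⟨c⁻¹, h, by rw [inv_inv]; exact hc⟩
end

section
/- Let m and n be coprime integers with m ≥ 2 and n ≥ 2. Then the Baumslag–Solitar group B(m,n) = ⟨x, t | x^n (t^{-1} x t)^{-m}⟩ is not bi-orderable. -/
/-!
In a bi-ordered group `a ↦ a ^ n` is strictly monotone, hence injective, so whatever commutes
with `a ^ n` commutes with `a`. In `B(m,n)` the element `xⁿ = (t⁻¹xt)ᵐ` commutes with `t⁻¹xt`, so a
bi-order would force `x` and `t⁻¹xt` to commute. They do not: `B(m,n)` maps to the HNN extension
of `ℤ` in which `t⁻¹ (m k) t = n k`, and for `m, n ≥ 2` the generator `1` lies in neither `nℤ` nor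
`mℤ`, so the commutator `x⁻¹ · t⁻¹x⁻¹ · tx · t⁻¹x · t` is a reduced word, nontrivial by Britton's
lemma.
-/

/-- A group is bi-orderable if it admits a strict total order invariant under
left and right multiplication. -/
def IsBiOrderable (G : Type*) [Group G] : Prop :=
  ∃ lt : G → G → Prop, IsStrictTotalOrder G lt ∧
    ∀ a b c : G, lt a b → lt (c * a) (c * b) ∧ lt (a * c) (b * c)

namespace IsBiOrderable

variable {G : Type*} [Group G]

theorem pow_left_injective (h : IsBiOrderable G) {n : ℕ} (hn : n ≠ 0) :
    Function.Injective fun a : G ↦ a ^ n := by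
  obtain ⟨lt, hlt, hmul⟩ := h
  classical
  let := linearOrderOfSTO lt
  have : MulLeftStrictMono G := ⟨fun c _ _ hab ↦ (hmul _ _ c hab).1⟩
  have : MulRightStrictMono G := ⟨fun c _ _ hab ↦ (hmul _ _ c hab).2⟩
  exact (pow_left_strictMono hn).injective

theorem commute_of_commute_pow (h : IsBiOrderable G) {n : ℕ} (hn : n ≠ 0) {a b : G}
    (hab : Commute (a ^ n) b) : Commute a b := by
  have hconj : (b * a * b⁻¹) ^ n = a ^ n := by
    rw [conj_pow, ← hab.eq, mul_inv_cancel_right]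
  have := h.pow_left_injective hn hconj
  rw [mul_inv_eq_iff_eq_mul] at this
  exact this.symm

theorem commute_of_pow_eq_pow (h : IsBiOrderable G) {m n : ℕ} (hn : n ≠ 0) {a b : G}
    (hab : a ^ n = b ^ m) : Commute a b :=
  h.commute_of_commute_pow hn (hab ▸ Commute.pow_left (Commute.refl b) m)

end IsBiOrderable

namespace HNNExtension

variable {G : Type*} [Group G] {A B : Subgroup G} (φ : A ≃* B)

theorem not_commute_of_conj {a : G} (hA : a ∉ A) (hB : a ∉ B) :
    ¬ Commute (of a : HNNExtension G A B φ) (t⁻¹ * of a * t) := by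
  intro hcomm
  -- `(u, g)` stands for `t ^ u * g`: this spells the commutator of `a` and `t⁻¹ * a * t`
  let w : NormalWord.ReducedWord G A B :=
    { head := a⁻¹
      toList := [(-1, a⁻¹), (1, a), (-1, a), (1, 1)]
      chain := by
        simp only [List.isChain_cons_cons, List.isChain_singleton, and_true]
        exact ⟨fun h ↦ (hB (by simpa using h)).elim, fun h ↦ (hA h).elim,
          fun h ↦ (hB (by simpa using h)).elim⟩ }
  have hw : w.prod φ = 1 := by
    have : w.prod φ = (of a)⁻¹ * (t⁻¹ * of a * t)⁻¹ * (of a * (t⁻¹ * of a * t)) := by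
      simp only [w, NormalWord.ReducedWord.prod, List.map_cons, List.map_nil, List.prod_cons,
        List.prod_nil, Units.val_neg, Units.val_one, zpow_neg, zpow_one, map_inv, map_one]
      group
    rw [this, hcomm.eq]
    group
  have := ReducedWord.toList_eq_nil_of_mem_of_range φ w (by rw [hw]; exact one_mem _)
  simp [w] at this

end HNNExtension

section PowRange

variable {G : Type*} [CommGroup G] [IsMulTorsionFree G] {m n : ℕ}

noncomputable def powRangeEquiv (hm : m ≠ 0) (hn : n ≠ 0) :
    (powMonoidHom n : G →* G).range ≃* (powMonoidHom m : G →* G).range :=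
  (MonoidHom.ofInjective (pow_left_injective hn)).symm.trans
    (MonoidHom.ofInjective (pow_left_injective hm))

theorem powRangeEquiv_pow (hm : m ≠ 0) (hn : n ≠ 0) (x : G) :
    powRangeEquiv hm hn ⟨x ^ n, x, rfl⟩ = ⟨x ^ m, x, rfl⟩ := by
  have hroot : (MonoidHom.ofInjective (f := (powMonoidHom n : G →* G))
      (pow_left_injective hn)).symm ⟨x ^ n, x, rfl⟩ = x :=
    (MulEquiv.symm_apply_eq _).2 (Subtype.ext rfl)
  simp only [powRangeEquiv, MulEquiv.trans_apply, hroot]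
  rfl

theorem HNNExtension.conj_pow_eq_pow (hm : m ≠ 0) (hn : n ≠ 0) (x : G) :
    (t⁻¹ * of x * t : HNNExtension G _ _ (powRangeEquiv hm hn)) ^ m = of x ^ n := by
  have hsymm : (powRangeEquiv hm hn).symm ⟨x ^ m, x, rfl⟩ = ⟨x ^ n, x, rfl⟩ :=
    (MulEquiv.symm_apply_eq _).2 (powRangeEquiv_pow hm hn x).symm
  have hconj := conj_pow (a := (t : HNNExtension G _ _ (powRangeEquiv hm hn))⁻¹)
    (b := of x) (i := m)
  rw [inv_inv] at hconj
  have hφ := equiv_symm_eq_conj (φ := powRangeEquiv hm hn) ⟨x ^ m, x, rfl⟩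
  rw [hsymm] at hφ
  rw [hconj, ← map_pow, ← map_pow]
  exact hφ.symm

end PowRange

theorem Int.ofAdd_one_notMem_range_powMonoidHom {n : ℕ} (hn : 2 ≤ n) :
    Multiplicative.ofAdd (1 : ℤ) ∉ (powMonoidHom n : Multiplicative ℤ →* _).range := by
  rintro ⟨x, hx⟩
  have : (n : ℤ) * x.toAdd = 1 := by
    simpa [Multiplicative.ext_iff] using congrArg Multiplicative.toAdd hx
  have := Int.eq_one_of_mul_eq_one_right (by positivity) this
  omega

namespace BaumslagSolitar

def relator (m n : ℕ) : FreeGroup Bool :=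
  FreeGroup.of true ^ (n : ℤ) *
    ((FreeGroup.of false)⁻¹ * FreeGroup.of true * FreeGroup.of false) ^ (-(m : ℤ))

theorem lift_relator_eq_one_iff {m n : ℕ} {H : Type*} [Group H] (f : Bool → H) :
    FreeGroup.lift f (relator m n) = 1 ↔ f true ^ n = ((f false)⁻¹ * f true * f false) ^ m := by
  simp [relator, zpow_neg, mul_inv_eq_one]

theorem of_pow_eq_conj_pow (m n : ℕ) :
    (PresentedGroup.of true : PresentedGroup {relator m n}) ^ n =
      ((PresentedGroup.of false)⁻¹ * PresentedGroup.of true * PresentedGroup.of false) ^ m := by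
  rw [← lift_relator_eq_one_iff,
    ← FreeGroup.lift_unique (f := PresentedGroup.of) (PresentedGroup.mk _) fun _ ↦ rfl]
  exact PresentedGroup.one_of_mem rfl

end BaumslagSolitar

open BaumslagSolitar HNNExtension in
theorem baumslag_solitar_not_biorderable_general
    (m n : ℕ) (hm : 2 ≤ m) (hn : 2 ≤ n) :
    ¬ IsBiOrderable (PresentedGroup
      ({(FreeGroup.of true) ^ (n : ℤ) *
          ((FreeGroup.of false)⁻¹ * FreeGroup.of true * FreeGroup.of false) ^ (-(m : ℤ))} :
        Set (FreeGroup Bool))) := by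
  change ¬ IsBiOrderable (PresentedGroup {relator m n})
  intro hbo
  have hm0 : m ≠ 0 := by omega
  have hn0 : n ≠ 0 := by omega
  let g : Multiplicative ℤ := .ofAdd 1
  let f : Bool → HNNExtension _ _ _ (powRangeEquiv hm0 hn0) := fun b ↦ cond b (of g) t
  have hf : ∀ r ∈ ({relator m n} : Set _), FreeGroup.lift f r = 1 := by
    rintro r rfl
    exact (lift_relator_eq_one_iff f).2 (conj_pow_eq_pow hm0 hn0 g).symm
  have hcomm := (hbo.commute_of_pow_eq_pow hn0 (of_pow_eq_conj_pow m n)).map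
    (PresentedGroup.toGroup hf)
  simp only [map_mul, map_inv, PresentedGroup.toGroup.of] at hcomm
  exact not_commute_of_conj _ (Int.ofAdd_one_notMem_range_powMonoidHom hn)
    (Int.ofAdd_one_notMem_range_powMonoidHom hm) hcomm

/-- **Example 2.2.** The Baumslag–Solitar group
`B(m,n) = ⟨x, t ∣ xⁿ (t⁻¹xt)⁻ᵐ⟩` with coprime `m, n ≥ 2` is not bi-orderable.
Here `x = FreeGroup.of true` and `t = FreeGroup.of false`. -/
theorem baumslag_solitar_not_biorderable
    (m n : ℕ) (hm : 2 ≤ m) (hn : 2 ≤ n) (hcop : Nat.Coprime m n) :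
    ¬ IsBiOrderable (PresentedGroup
      ({(FreeGroup.of true) ^ (n : ℤ) *
          ((FreeGroup.of false)⁻¹ * FreeGroup.of true * FreeGroup.of false) ^ (-(m : ℤ))} :
        Set (FreeGroup Bool))) :=
  baumslag_solitar_not_biorderable_general m n hm hn
end
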